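/- arXiv:2009.08960 — 7 statements merged into one kernel-verified Lean document; each statement's English description precedes it below -/
import Mathlib

section
/- Let q ≥ 0 and let n, k be positive integers with n − q even, n − q > 0, and (q+1)(2^k − 1) ≤ n. Then there exists an edge k-coloring of K_n such that every matching in K_n covering exactly n − q vertices contains at least one edge of each of the k colors. -/
/-!
Colour an edge by the class of its smaller endpoint, the classes being consecutive intervals
starting at `a c = (2^c - 1)(q + 1)`, so that `a (c + 1) = 2 a c + q + 1`. If a matching missing
at most `q` vertices avoided colour `c`, every edge meeting the first `a (c + 1)` vertices would
have its smaller endpoint among the first `a c`. These smaller endpoints are distinct, so those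
edges cover at most `2 a c` vertices, and with the `q` uncovered ones this is too few to exhaust
the first `a (c + 1)` vertices.
-/

open Finset

namespace Sym2

variable {α : Type*} [LinearOrder α]

theorem inf_mem (e : Sym2 α) : e.inf ∈ e := by
  induction e using Sym2.ind with
  | _ x y => rcases min_choice x y with h | h <;> simp [h]

theorem inf_le_of_mem {e : Sym2 α} {v : α} (hv : v ∈ e) : e.inf ≤ v := by
  induction e using Sym2.ind with
  | _ x y => rcases Sym2.mem_iff.1 hv with rfl | rfl <;> simp

end Sym2

section Matching

variable {V : Type*} [DecidableEq V] {M : Finset (Sym2 V)}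

theorem card_biUnion_toFinset_of_matching (hdiag : ∀ e ∈ M, ¬ e.IsDiag)
    (hdisj : ∀ e ∈ M, ∀ f ∈ M, e ≠ f → ∀ v : V, v ∈ e → v ∉ f) :
    #(M.biUnion Sym2.toFinset) = 2 * #M := by
  rw [card_biUnion fun e he f hf hef => disjoint_left.2 fun v hve hvf =>
      hdisj e he f hf hef v (Sym2.mem_toFinset.1 hve) (Sym2.mem_toFinset.1 hvf),
    sum_congr rfl fun e he => Sym2.card_toFinset_of_not_isDiag e (hdiag e he),
    sum_const, smul_eq_mul, mul_comm]

variable [Fintype V]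

theorem card_le_card_uncovered_add_two_mul (S : Finset V) :
    #S ≤ #(M.biUnion Sym2.toFinset)ᶜ + 2 * #{e ∈ M | ∃ v ∈ S, v ∈ e} := by
  set E := {e ∈ M | ∃ v ∈ S, v ∈ e}
  have hcover : S ⊆ (M.biUnion Sym2.toFinset)ᶜ ∪ E.biUnion Sym2.toFinset := by
    intro v hv
    by_cases hcov : v ∈ M.biUnion Sym2.toFinset
    · obtain ⟨e, he, hve⟩ := mem_biUnion.1 hcov
      exact mem_union_right _ <| mem_biUnion.2
        ⟨e, mem_filter.2 ⟨he, v, hv, Sym2.mem_toFinset.1 hve⟩, hve⟩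
    · exact mem_union_left _ (mem_compl.2 hcov)
  have hedges : #(E.biUnion Sym2.toFinset) ≤ #E * 2 :=
    card_biUnion_le_card_mul _ _ 2 fun e _ => by
      rw [Sym2.card_toFinset]
      split_ifs <;> norm_num
  have := (card_le_card hcover).trans (card_union_le _ _)
  omega

variable [LinearOrder V]

theorem card_le_card_uncovered_add_two_mul_of_inf_mem
    (hdisj : ∀ e ∈ M, ∀ f ∈ M, e ≠ f → ∀ v : V, v ∈ e → v ∉ f) {S T : Finset V}
    (hST : ∀ e ∈ M, ∀ v ∈ S, v ∈ e → e.inf ∈ T) :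
    #S ≤ #(M.biUnion Sym2.toFinset)ᶜ + 2 * #T := by
  have hinj : #{e ∈ M | ∃ v ∈ S, v ∈ e} ≤ #T := by
    refine card_le_card_of_injOn Sym2.inf (fun e he => ?_) fun e he f hf hef => ?_
    · obtain ⟨he, v, hv, hve⟩ := mem_filter.1 he
      exact hST e he v hv hve
    · by_contra hne
      exact hdisj e (mem_filter.1 he).1 f (mem_filter.1 hf).1 hne _ e.inf_mem
        (hef ▸ f.inf_mem)
  have := card_le_card_uncovered_add_two_mul (M := M) S
  omega

end Matching

section BlockColoring

def blockStart (q c : ℕ) : ℕ := (2 ^ c - 1) * (q + 1)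

theorem blockStart_succ (q c : ℕ) : blockStart q (c + 1) = 2 * blockStart q c + (q + 1) := by
  have h : 1 ≤ 2 ^ c := Nat.one_le_two_pow
  simp only [blockStart]
  zify [h, Nat.one_le_two_pow (n := c + 1)]
  ring

theorem blockStart_strictMono (q : ℕ) : StrictMono (blockStart q) :=
  strictMono_nat_of_lt_succ fun c => by rw [blockStart_succ]; omega

/-- The colour of vertex `m`: colour `c < k - 1` on `blockStart q c ≤ m < blockStart q (c + 1)`,
a block of `2^c (q + 1)` vertices, and colour `k - 1` from `blockStart q (k - 1)` on. -/
def blockColor (q k m : ℕ) : ℕ := Nat.findGreatest (fun c => blockStart q c ≤ m) (k - 1)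

variable {q k m c : ℕ}

theorem blockColor_lt (hk : 1 ≤ k) : blockColor q k m < k :=
  lt_of_le_of_lt (Nat.findGreatest_le _) (by omega)

theorem blockColor_eq (hc : c < k) (hlo : blockStart q c ≤ m) (hhi : m < blockStart q (c + 1)) :
    blockColor q k m = c :=
  Nat.findGreatest_eq_iff.2 ⟨by omega, fun _ => hlo, fun d hcd _ hd =>
    absurd (((blockStart_strictMono q).monotone (by omega : c + 1 ≤ d)).trans hd) (by omega)⟩

theorem lt_blockStart_of_blockColor_ne (hc : c < k) (hhi : m < blockStart q (c + 1))
    (hne : blockColor q k m ≠ c) : m < blockStart q c := by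
  by_contra! hlo
  exact hne (blockColor_eq hc hlo hhi)

end BlockColoring

theorem stmt_6_general (q n k : ℕ) (hk : 1 ≤ k)
    (hbound : (q + 1) * (2 ^ k - 1) ≤ n) :
    ∃ φ : Sym2 (Fin n) → Fin k,
      ∀ M : Finset (Sym2 (Fin n)),
        (∀ e ∈ M, ¬ e.IsDiag) →
        (∀ e ∈ M, ∀ f ∈ M, e ≠ f → ∀ v : Fin n, v ∈ e → v ∉ f) →
        2 * M.card = n - q →
        ∀ col : Fin k, ∃ e ∈ M, φ e = col := by
  refine ⟨fun e => ⟨blockColor q k e.inf, blockColor_lt hk⟩,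
    fun M hdiag hdisj hcard c => ?_⟩
  by_contra! hmiss
  have hfit : blockStart q (c + 1) ≤ n := calc
    _ ≤ blockStart q k := (blockStart_strictMono q).monotone c.isLt
    _ ≤ n := by rw [blockStart, mul_comm]; exact hbound
  have key := card_le_card_uncovered_add_two_mul_of_inf_mem hdisj
    (S := {v : Fin n | v < blockStart q (c + 1)}) (T := {v : Fin n | v < blockStart q c})
    fun e he v hv hve => by
      simp only [mem_filter, mem_univ, true_and] at hv ⊢
      exact lt_blockStart_of_blockColor_ne c.isLt
        ((Fin.le_def.1 (Sym2.inf_le_of_mem hve)).trans_lt hv) fun h => hmiss e he (Fin.ext h)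
  rw [Fin.card_filter_val_lt, Fin.card_filter_val_lt, card_compl, Fintype.card_fin,
    card_biUnion_toFinset_of_matching hdiag hdisj, hcard] at key
  have := blockStart_succ q c
  omega

/-- If `(q+1)(2^k - 1) ≤ n` (with `n - q` positive and even), then there is an edge
`k`-coloring of `K_n` such that every matching covering exactly `n - q` vertices
contains an edge of each of the `k` colors. -/
theorem stmt_6 (q n k : ℕ) (hk : 1 ≤ k) (hpos : 0 < n - q) (heven : Even (n - q))
    (hbound : (q + 1) * (2 ^ k - 1) ≤ n) :
    ∃ φ : Sym2 (Fin n) → Fin k,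
      ∀ M : Finset (Sym2 (Fin n)),
        (∀ e ∈ M, ¬ e.IsDiag) →
        (∀ e ∈ M, ∀ f ∈ M, e ≠ f → ∀ v : Fin n, v ∈ e → v ∉ f) →
        2 * M.card = n - q →
        ∀ col : Fin k, ∃ e ∈ M, φ e = col :=
  stmt_6_general q n k hk hbound
end

section
/- Let φ be an ordered edge coloring of K_n with vertex order v_1,…,v_n and colors 1,…,k, with inherited vertex coloring φ′, and for a color t let M_t(j) be the number of i ≤ j with φ′(v_i) = t. Then φ is F_q-polychromatic (every matching covering exactly n − q vertices gets all colors) if and only if for every color t there exists j ∈ [1, n] with M_t(j) > (j + q)/2. -/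
/-!
An edge `s(a, b)` with `a < b` has colour `φ' a`, so a matching misses the colour `t` exactly when
no edge has its lower endpoint coloured `t`. In such a matching, each vertex of colour `t` among
the first `j` is either uncovered (at most `q` of them) or matched to its own earlier vertex of
another colour, whence `2 M_t(j) ≤ j + q`. Conversely, if in every initial segment the vertices of
colour `t` outnumber the others by at most `q`, a matching of size `(n - q) / 2` missing `t` is
built greedily, as for balanced parentheses: if the first vertex has colour `t`, leave it uncovered
and lower `q`; otherwise match it with the first vertex of colour `t`, or with any other vertex if
there is none.
-/

open Finset

def EdgesDisjoint {α : Type*} (M : Finset (Sym2 α)) : Prop :=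
  ∀ e ∈ M, ∀ f ∈ M, e ≠ f → ∀ v, v ∈ e → v ∉ f

theorem EdgesDisjoint.card_uncovered_add {α : Type*} [Fintype α] [DecidableEq α]
    {M : Finset (Sym2 α)} (hM : EdgesDisjoint M) (hdiag : ∀ e ∈ M, ¬e.IsDiag) :
    #{x | ∀ e ∈ M, x ∉ e} + 2 * #M = Fintype.card α := by
  have hcovered : #{x | ¬∀ e ∈ M, x ∉ e} = 2 * #M := by
    have : ({x | ¬∀ e ∈ M, x ∉ e} : Finset α) = M.biUnion Sym2.toFinset := by
      ext x
      simp
    rw [this, card_biUnion,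
      sum_congr rfl fun e he => Sym2.card_toFinset_of_not_isDiag e (hdiag e he), sum_const,
      smul_eq_mul, mul_comm]
    intro e he f hf hef
    exact disjoint_left.mpr fun x hxe hxf =>
      hM e he f hf hef x (Sym2.mem_toFinset.mp hxe) (Sym2.mem_toFinset.mp hxf)
  rw [← hcovered, card_filter_add_card_filter_not, card_univ]

section LinearOrder

variable {α : Type*} [LinearOrder α] {p : α → Prop}

def IsLowerAvoidingMatching (p : α → Prop) (s : Finset α) (M : Finset (Sym2 α)) : Prop :=
  EdgesDisjoint M ∧ ∀ e ∈ M, ∃ a ∈ s, ∃ b ∈ s, a < b ∧ ¬p a ∧ e = s(a, b)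

def PrefixExcessLE (p : α → Prop) [DecidablePred p] (s : Finset α) (q : ℕ) : Prop :=
  ∀ x, #{y ∈ s | y ≤ x ∧ p y} ≤ #{y ∈ s | y ≤ x ∧ ¬p y} + q

namespace IsLowerAvoidingMatching

variable {s t : Finset α} {M : Finset (Sym2 α)}

theorem mono (hM : IsLowerAvoidingMatching p s M) (hst : s ⊆ t) :
    IsLowerAvoidingMatching p t M :=
  ⟨hM.1, fun e he => by
    obtain ⟨a, ha, b, hb, hab, hpa, rfl⟩ := hM.2 e he
    exact ⟨a, hst ha, b, hst hb, hab, hpa, rfl⟩⟩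

theorem mem_of_mem (hM : IsLowerAvoidingMatching p s M) {e : Sym2 α} (he : e ∈ M) {v : α}
    (hv : v ∈ e) : v ∈ s := by
  obtain ⟨a, ha, b, hb, -, -, rfl⟩ := hM.2 e he
  rcases Sym2.mem_iff.mp hv with rfl | rfl <;> assumption

theorem not_isDiag (hM : IsLowerAvoidingMatching p s M) {e : Sym2 α} (he : e ∈ M) :
    ¬e.IsDiag := by
  obtain ⟨a, -, b, -, hab, -, rfl⟩ := hM.2 e he
  exact Sym2.mk_isDiag_iff.not.mpr hab.ne

theorem insert [DecidableEq α] {a b : α} (hM : IsLowerAvoidingMatching p ((s.erase b).erase a) M)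
    (ha : a ∈ s) (hb : b ∈ s) (hab : a < b) (hpa : ¬p a) :
    s(a, b) ∉ M ∧ IsLowerAvoidingMatching p s (insert s(a, b) M) := by
  have hout : ∀ e ∈ M, a ∉ e ∧ b ∉ e := fun e he =>
    ⟨fun h => by simpa using hM.mem_of_mem he h,
     fun h => by simpa using erase_subset _ _ (hM.mem_of_mem he h)⟩
  have hnew : ∀ e ∈ M, ∀ v ∈ s(a, b), v ∉ e := by
    intro e he v hv
    rcases Sym2.mem_iff.mp hv with rfl | rfl
    exacts [(hout e he).1, (hout e he).2]
  refine ⟨fun h => (hout _ h).1 (Sym2.mem_mk_left a b), ?_, ?_⟩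
  · intro e he f hf hef v hve hvf
    rcases mem_insert.mp he with rfl | he <;> rcases mem_insert.mp hf with rfl | hf
    · exact hef rfl
    · exact hnew f hf v hve hvf
    · exact hnew e he v hvf hve
    · exact hM.1 e he f hf hef v hve hvf
  · intro e he
    rcases mem_insert.mp he with rfl | he
    · exact ⟨a, ha, b, hb, hab, hpa, rfl⟩
    · exact (hM.mono ((erase_subset _ _).trans (erase_subset _ _))).2 e he

theorem exists_insert [DecidableEq α] {q : ℕ} {a b : α} (ha : a ∈ s) (hb : b ∈ s)
    (hab : a < b) (hpa : ¬p a) (hq : q + 2 ≤ #s)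
    (h : ∃ M, IsLowerAvoidingMatching p ((s.erase b).erase a) M ∧
      2 * #M = #((s.erase b).erase a) - q) :
    ∃ M, IsLowerAvoidingMatching p s M ∧ 2 * #M = #s - q := by
  obtain ⟨M, hM, hcard⟩ := h
  obtain ⟨hnotMem, hM'⟩ := hM.insert ha hb hab hpa
  refine ⟨_, hM', ?_⟩
  rw [card_insert_of_notMem hnotMem, card_erase_of_mem (mem_erase.mpr ⟨hab.ne, ha⟩),
    card_erase_of_mem hb] at *
  omega

end IsLowerAvoidingMatching

variable [DecidablePred p]

theorem prefixExcessLE_of_forall_not {s : Finset α} (hs : ∀ y ∈ s, ¬p y) (q : ℕ) :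
    PrefixExcessLE p s q := by
  intro x
  rw [filter_false_of_mem fun y hy h => hs y hy h.2, card_empty]
  exact Nat.zero_le _

namespace PrefixExcessLE

variable {s : Finset α} {q : ℕ}

theorem one_le_of_isLeast (h : PrefixExcessLE p s q) {b : α} (hb : IsLeast s b) (hpb : p b) :
    1 ≤ q := by
  have hbs : b ∈ s := hb.1
  have hsing : ∀ y ∈ s, y ≤ b → y = b := fun y hy hyb => le_antisymm hyb (hb.2 hy)
  have hbad : #{y ∈ s | y ≤ b ∧ p y} = 1 :=
    card_eq_one.mpr ⟨b, by ext y; simp only [mem_filter, mem_singleton]; grind⟩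
  have hgood : #{y ∈ s | y ≤ b ∧ ¬p y} = 0 := by
    rw [card_eq_zero, filter_eq_empty_iff]
    grind
  have := h b
  omega

theorem erase_least [DecidableEq α] (h : PrefixExcessLE p s q) {b : α} (hb : IsLeast s b)
    (hpb : p b) : PrefixExcessLE p (s.erase b) (q - 1) := by
  have hq := h.one_le_of_isLeast hb hpb
  intro x
  by_cases hbx : b ≤ x
  · simp only [filter_erase]
    rw [card_erase_of_mem (by simp [mem_coe.mp hb.1, hbx, hpb]),
      erase_eq_of_notMem (by simp [hpb])]
    have := h x
    omega
  · rw [filter_false_of_mem fun y hy h' => hbx ((hb.2 (mem_of_mem_erase hy)).trans h'.1)]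
    simp

theorem erase_erase [DecidableEq α] (h : PrefixExcessLE p s q) {a b : α} (ha : a ∈ s)
    (hb : b ∈ s) (hab : a < b) (hpa : ¬p a) (hpb : p b) (hbelow : ∀ y ∈ s, y < b → ¬p y) :
    PrefixExcessLE p ((s.erase b).erase a) q := by
  intro x
  by_cases hbx : b ≤ x
  · have hbad :
        #{y ∈ (s.erase b).erase a | y ≤ x ∧ p y} = #{y ∈ s | y ≤ x ∧ p y} - 1 := by
      rw [filter_erase, filter_erase, erase_eq_of_notMem (by simp [hpa]),
        card_erase_of_mem (by simp [hb, hbx, hpb])]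
    have hgood :
        #{y ∈ (s.erase b).erase a | y ≤ x ∧ ¬p y} = #{y ∈ s | y ≤ x ∧ ¬p y} - 1 := by
      rw [filter_erase, filter_erase, erase_eq_of_notMem (s := filter _ s) (by simp [hpb]),
        card_erase_of_mem (by simp [ha, hab.le.trans hbx, hpa])]
    rw [hbad, hgood]
    have := h x
    omega
  · rw [filter_false_of_mem fun y hy h' => hbelow y (mem_of_mem_erase (mem_of_mem_erase hy))
      (lt_of_le_of_lt h'.1 (not_le.mp hbx)) h'.2]
    simp

end PrefixExcessLE

theorem exists_isLowerAvoidingMatching_of_prefixExcessLE [DecidableEq α] (s : Finset α) (q : ℕ)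
    (heven : Even (#s - q)) (h : PrefixExcessLE p s q) :
    ∃ M, IsLowerAvoidingMatching p s M ∧ 2 * #M = #s - q := by
  induction s using Finset.strongInduction generalizing q with
  | H s ih =>
  by_cases hsq : #s ≤ q
  · exact ⟨∅, ⟨by simp [EdgesDisjoint], by simp⟩, by simp; omega⟩
  obtain ⟨c, hc⟩ := heven
  have hne : s.Nonempty := card_pos.mp (by omega)
  set a := s.min' hne
  have ha : IsLeast (s : Set α) a := isLeast_min' s hne
  have hpair : ∀ {b}, b ∈ s → a < b → ¬p a → PrefixExcessLE p ((s.erase b).erase a) q →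
      ∃ M, IsLowerAvoidingMatching p s M ∧ 2 * #M = #s - q := fun hb hab hpa h' =>
    IsLowerAvoidingMatching.exists_insert ha.1 hb hab hpa (by omega) <|
      ih _ ((erase_subset _ _).trans_ssubset (erase_ssubset hb)) q ⟨c - 1, by
        rw [card_erase_of_mem (mem_erase.mpr ⟨hab.ne, ha.1⟩), card_erase_of_mem hb]; omega⟩ h'
  by_cases hbad : ∃ y ∈ s, p y
  · have hbne : {y ∈ s | p y}.Nonempty := by simpa [Finset.Nonempty] using hbad
    set b := {y ∈ s | p y}.min' hbne
    have hb : b ∈ s ∧ p b := mem_filter.mp (min'_mem _ hbne)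
    have hbelow : ∀ y ∈ s, y < b → ¬p y := fun y hy hyb hpy =>
      (min'_le _ y (mem_filter.mpr ⟨hy, hpy⟩)).not_gt hyb
    rcases (ha.2 hb.1).lt_or_eq with hab | hab
    · have hpa := hbelow a ha.1 hab
      exact hpair hb.1 hab hpa (h.erase_erase ha.1 hb.1 hab hpa hb.2 hbelow)
    · rw [hab] at ha
      have hq := h.one_le_of_isLeast ha hb.2
      obtain ⟨M, hM, hcard⟩ := ih _ (erase_ssubset hb.1) (q - 1)
        ⟨c, by rw [card_erase_of_mem hb.1]; omega⟩ (h.erase_least ha hb.2)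
      refine ⟨M, hM.mono (erase_subset _ _), ?_⟩
      rw [hcard, card_erase_of_mem hb.1]
      omega
  · push Not at hbad
    obtain ⟨b, hb, hba⟩ := exists_mem_ne (s := s) (by omega) a
    exact hpair hb (lt_of_le_of_ne (ha.2 hb) hba.symm) (hbad a ha.1)
      (prefixExcessLE_of_forall_not (fun y hy => hbad y (mem_of_mem_erase (mem_of_mem_erase hy))) q)

theorem EdgesDisjoint.card_filter_le_card_filter_not_add [Fintype α] [DecidableEq α]
    {M : Finset (Sym2 α)} (hM : EdgesDisjoint M) (hdiag : ∀ e ∈ M, ¬e.IsDiag)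
    (hlow : ∀ a b, a < b → s(a, b) ∈ M → ¬p a) {S : Finset α}
    (hS : IsLowerSet (S : Set α)) :
    #{x ∈ S | p x} ≤ #{x ∈ S | ¬p x} + #{x | ∀ e ∈ M, x ∉ e} := by
  have hmatched : #{x ∈ S | p x ∧ ¬∀ e ∈ M, x ∉ e} ≤ #{x ∈ S | ¬p x} := by
    refine card_le_card_of_forall_subsingleton (fun x y => y < x ∧ s(y, x) ∈ M) ?_ ?_
    · intro x hx
      simp only [mem_filter, not_forall, not_not] at hx
      obtain ⟨hxS, hpx, e, he, hxe⟩ := hx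
      obtain ⟨y, rfl⟩ := Sym2.mem_iff_exists.mp hxe
      have hyx : y < x := by
        rcases lt_or_gt_of_ne (Sym2.mk_isDiag_iff.not.mp (hdiag _ he)) with hxy | hyx
        · exact absurd hpx (hlow x y hxy he)
        · exact hyx
      rw [Sym2.eq_swap] at he
      exact ⟨y, mem_filter.mpr ⟨hS hyx.le hxS, hlow y x hyx he⟩, hyx, he⟩
    · intro y _ x₁ hx₁ x₂ hx₂
      by_contra hne
      exact hM _ hx₁.2.2 _ hx₂.2.2 (fun h => hne (Sym2.congr_right.mp h)) y
        (Sym2.mem_mk_left y x₁) (Sym2.mem_mk_left y x₂)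
  have hunmatched : #{x ∈ S | p x ∧ ∀ e ∈ M, x ∉ e} ≤ #{x | ∀ e ∈ M, x ∉ e} :=
    card_le_card fun x hx => by
      simp only [mem_filter, mem_univ, true_and] at hx ⊢
      exact hx.2.2
  have hsplit :=
    card_filter_add_card_filter_not (s := {x ∈ S | p x}) (fun x => ∀ e ∈ M, x ∉ e)
  simp only [filter_filter] at hsplit
  omega

end LinearOrder
theorem Fin.card_filter_val_lt_and_add_card_filter_val_lt_and_not {n j : ℕ} (hj : j ≤ n)
    (p : Fin n → Prop) [DecidablePred p] :
    #{i : Fin n | i.val < j ∧ p i} + #{i : Fin n | i.val < j ∧ ¬p i} = j := by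
  rw [← filter_filter, ← filter_filter, card_filter_add_card_filter_not, Fin.card_filter_val_lt,
    min_eq_right hj]

section Fin

variable {n q : ℕ} {p : Fin n → Prop} [DecidablePred p]

theorem Fin.prefixExcessLE_univ
    (h : ∀ j, 1 ≤ j → j ≤ n → 2 * #{i : Fin n | i.val < j ∧ p i} ≤ j + q) :
    PrefixExcessLE p univ q := by
  intro x
  have hle : ∀ y : Fin n, y ≤ x ↔ y.val < x.val + 1 := fun y => by rw [Fin.le_def]; omega
  have := h (x.val + 1) (by omega) x.isLt
  have := Fin.card_filter_val_lt_and_add_card_filter_val_lt_and_not (j := x.val + 1) x.isLt p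
  simp only [hle]
  omega

theorem EdgesDisjoint.two_mul_card_filter_val_lt_le {M : Finset (Sym2 (Fin n))}
    (hM : EdgesDisjoint M) (hdiag : ∀ e ∈ M, ¬e.IsDiag)
    (hlow : ∀ a b, a < b → s(a, b) ∈ M → ¬p a) (hcard : 2 * #M = n - q) {j : ℕ}
    (hj : j ≤ n) : 2 * #{i : Fin n | i.val < j ∧ p i} ≤ j + q := by
  have hprefix : IsLowerSet ((univ.filter fun i : Fin n => i.val < j) : Set (Fin n)) :=
    fun a b hba ha => by
      simp only [coe_filter, mem_univ, true_and, Set.mem_ofPred_eq] at ha ⊢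
      exact lt_of_le_of_lt hba ha
  have hbound := hM.card_filter_le_card_filter_not_add hdiag hlow hprefix
  simp only [filter_filter] at hbound
  have := hM.card_uncovered_add hdiag
  have := Fin.card_filter_val_lt_and_add_card_filter_val_lt_and_not hj p
  rw [Fintype.card_fin] at *
  omega

end Fin

/-- For an ordered edge coloring `φ` of `K_n` with inherited vertex coloring `φ'`:
`φ` is `F_q`-polychromatic iff for every color `t` there is a `j ∈ [1, n]` with
`M_t(j) > (j + q)/2` (stated as `2 * M_t(j) > j + q`). -/
theorem stmt_8 (n q k : ℕ) (heven : Even (n - q))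
    (φ : Sym2 (Fin n) → Fin k) (φ' : Fin n → Fin k)
    (hord : ∀ i j : Fin n, i < j → φ s(i, j) = φ' i) :
    ((∀ M : Finset (Sym2 (Fin n)),
        (∀ e ∈ M, ¬ e.IsDiag) →
        (∀ e ∈ M, ∀ f ∈ M, e ≠ f → ∀ v : Fin n, v ∈ e → v ∉ f) →
        2 * M.card = n - q →
        ∀ t : Fin k, ∃ e ∈ M, φ e = t) ↔
      (∀ t : Fin k, ∃ j : ℕ, 1 ≤ j ∧ j ≤ n ∧
        j + q < 2 * (Finset.univ.filter (fun i : Fin n => i.val < j ∧ φ' i = t)).card)) := by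
  constructor
  · intro hpoly t
    by_contra! hcon
    obtain ⟨M, hM, hcard⟩ := exists_isLowerAvoidingMatching_of_prefixExcessLE univ q
      (by simpa using heven) (Fin.prefixExcessLE_univ hcon)
    obtain ⟨e, he, het⟩ := hpoly M (fun e => hM.not_isDiag) hM.1 (by simpa using hcard) t
    obtain ⟨a, -, b, -, hab, hat, rfl⟩ := hM.2 e he
    exact hat ((hord a b hab).symm.trans het)
  · intro hcond M hdiag (hdisj : EdgesDisjoint M) hcard t
    by_contra! hmiss
    obtain ⟨j, -, hjn, hjt⟩ := hcond t
    have := hdisj.two_mul_card_filter_val_lt_le hdiag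
      (fun a b hab he hat => hmiss _ he ((hord a b hab).trans hat)) hcard hjn
    omega
end

section
/- Let φ be an ordered edge coloring of K_n with vertex order v_1,…,v_n, inherited vertex coloring φ′, and let t be a color such that M_t(j) < (j+q)/2 for all j ∈ [q+1, n−1], where M_t(j) = |{i ≤ j : φ′(v_i) = t}|. Then there exists a cycle of length n − q in K_n containing no edge of color t. -/
/-!
Call `i` bad if `i < n - 1` and `φ' i = t`. An edge whose smaller endpoint is good avoids `t`, so
the good vertices form a clique and a bad vertex is joined to every good vertex below it. For
`j < r = #bad - q` let `a_j` be the bad vertex with exactly `q + j` bad vertices below it, and let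
`g₀ < … < g_{m-1}` be the first `m = n - q - r` good vertices. The hypothesis at `j = a_j + 1` gives
`a_j ≥ q + 2j + 2`, so at least `j + 2` good vertices precede `a_j`, i.e. `g_j < g_{j+1} < a_j`;
at `j = n - 1` it gives `r < m`. Hence `g₀ a₀ g₁ a₁ … g_{r-1} a_{r-1} g_r … g_{m-1}` is a cycle
of length `n - q` avoiding `t`.
-/

open Finset SimpleGraph Function

namespace Fin

variable {V : Type*} {m r : ℕ}

theorem val_finRotate {N : ℕ} (i : Fin N) :
    (finRotate N i : ℕ) = if (i : ℕ) + 1 = N then (0 : ℕ) else i + 1 := by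
  obtain ⟨N, rfl⟩ : ∃ M, N = M + 1 := ⟨N - 1, by have := i.pos; omega⟩
  rw [coe_finRotate]
  simp [Fin.ext_iff]

/-- The sequence `g₀ a₀ g₁ a₁ … g_{r-1} a_{r-1} g_r … g_{m-1}`. -/
def interleave (hrm : r ≤ m) (g : Fin m → V) (a : Fin r → V) (i : Fin (m + r)) : V :=
  if h : (i : ℕ) % 2 = 1 ∧ (i : ℕ) < 2 * r then a ⟨(i : ℕ) / 2, by omega⟩
  else g ⟨(i : ℕ) - min ((i : ℕ) / 2) r, by omega⟩

theorem interleave_injective {g : Fin m → V} {a : Fin r → V} (hrm : r ≤ m) (hg : Injective g)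
    (ha : Injective a) (hga : ∀ i j, g i ≠ a j) : Injective (interleave hrm g a) := by
  intro i i' h
  simp only [interleave] at h
  split_ifs at h
  · have := Fin.mk.inj (ha h); ext; omega
  · exact absurd h.symm (hga _ _)
  · exact absurd h (hga _ _)
  · have := Fin.mk.inj (hg h); ext; omega

end Fin

namespace Finset

variable {α : Type*} [LinearOrder α] {k : ℕ}

theorem filter_eq_map_orderEmbOfFin (s : Finset α) (h : #s = k) (p : α → Prop)
    [DecidablePred p] :
    {x ∈ s | p x} =
      ({i | p (s.orderEmbOfFin h i)} : Finset (Fin k)).map (s.orderEmbOfFin h).toEmbedding := by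
  ext x
  simp only [mem_filter, mem_map, mem_univ, true_and, RelEmbedding.coe_toEmbedding]
  constructor
  · rintro ⟨hx, hp⟩
    obtain ⟨j, rfl⟩ : x ∈ Set.range (s.orderEmbOfFin h) := by rwa [range_orderEmbOfFin]
    exact ⟨j, hp, rfl⟩
  · rintro ⟨j, hj, rfl⟩
    exact ⟨orderEmbOfFin_mem s h j, hj⟩

theorem card_filter_lt_orderEmbOfFin (s : Finset α) (h : #s = k) (i : Fin k) :
    #{x ∈ s | x < s.orderEmbOfFin h i} = i := by
  simp [filter_eq_map_orderEmbOfFin s h, filter_gt_eq_Iio]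

theorem card_filter_le_orderEmbOfFin (s : Finset α) (h : #s = k) (i : Fin k) :
    #{x ∈ s | x ≤ s.orderEmbOfFin h i} = i + 1 := by
  simp [filter_eq_map_orderEmbOfFin s h, filter_ge_eq_Iic]

theorem orderEmbOfFin_lt_of_lt_card_filter_lt (s : Finset α) (h : #s = k) (i : Fin k) {x : α}
    (hi : (i : ℕ) < #{y ∈ s | y < x}) : s.orderEmbOfFin h i < x := by
  by_contra! hx
  have hsub : {y ∈ s | y < x} ⊆ {y ∈ s | y < s.orderEmbOfFin h i} := by
    intro y
    simp only [mem_filter, and_imp]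
    exact fun hy hlt => ⟨hy, hlt.trans_le hx⟩
  have := card_le_card hsub
  rw [card_filter_lt_orderEmbOfFin] at this
  omega

theorem card_filter_compl_lt_add_card_filter_lt [Fintype α] [LocallyFiniteOrderBot α]
    (s : Finset α) (x : α) : #{y ∈ sᶜ | y < x} + #{y ∈ s | y < x} = #(Iio x) := by
  rw [← card_filter_add_card_filter_not (s := Iio x) (· ∉ s)]
  congr 1 <;> congr 1 <;> ext y <;> simp [and_comm]

end Finset

theorem Fin.orderEmbOfFin_compl_lt_orderEmbOfFin {n q : ℕ} {B : Finset (Fin n)}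
    (hBn : ∀ b ∈ B, (b : ℕ) + 1 < n)
    (hB : ∀ j, q + 1 ≤ j → j ≤ n - 1 → 2 * #{b ∈ B | b.val < j} < j + q)
    {i j : ℕ} (hi : i < #Bᶜ) (hj : q + j < #B) (hij : i ≤ j + 1) :
    Bᶜ.orderEmbOfFin rfl ⟨i, hi⟩ < B.orderEmbOfFin rfl ⟨q + j, hj⟩ := by
  set a := B.orderEmbOfFin rfl ⟨q + j, hj⟩
  have hlt : #{b ∈ B | b < a} = q + j := B.card_filter_lt_orderEmbOfFin rfl _
  have hle : #{b ∈ B | b ≤ a} = q + j + 1 := B.card_filter_le_orderEmbOfFin rfl _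
  have hsplit := B.card_filter_compl_lt_add_card_filter_lt a
  rw [Fin.card_Iio] at hsplit
  have haB : (a : ℕ) + 1 < n := hBn _ (orderEmbOfFin_mem _ _ _)
  have hcount := hB ((a : ℕ) + 1) (by omega) (by omega)
  rw [filter_congr fun b _ => Nat.lt_succ_iff.trans Fin.le_def.symm, hle] at hcount
  apply orderEmbOfFin_lt_of_lt_card_filter_lt
  show i < #{y ∈ Bᶜ | y < a}
  omega

namespace SimpleGraph

variable {V : Type*} {G : SimpleGraph V}

theorem cycleGraph_isContained_of_adj_finRotate {N : ℕ} {f : Fin N → V} (hf : Injective f)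
    (hadj : ∀ i, G.Adj (f i) (f (finRotate N i))) : cycleGraph N ⊑ G := by
  have hsucc : ∀ u v : Fin N, ((v - u : Fin N) : ℕ) = 1 → v = finRotate N u := by
    intro u v h
    obtain ⟨N, rfl⟩ : ∃ M, N = M + 1 := ⟨N - 1, by have := u.pos; omega⟩
    rw [finRotate_apply, ← sub_eq_iff_eq_add', Fin.ext_iff, h, Fin.val_one', Nat.mod_eq_of_lt]
    have := (v - u).isLt
    omega
  refine ⟨⟨⟨f, fun {u v} huv => ?_⟩, hf⟩⟩
  rcases cycleGraph_adj'.1 huv with h | h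
  · exact (hsucc v u h ▸ hadj v).symm
  · exact hsucc u v h ▸ hadj u

theorem cycleGraph_isContained_interleave {m r : ℕ} {g : Fin m → V} {a : Fin r → V}
    (hm : 2 ≤ m) (hrm : r < m) (hg : Injective g) (ha : Injective a) (hga : ∀ i j, g i ≠ a j)
    (hgg : ∀ i j, i ≠ j → G.Adj (g i) (g j))
    (hag : ∀ j : Fin r, G.Adj (a j) (g ⟨j, j.isLt.trans hrm⟩) ∧
      G.Adj (a j) (g ⟨j + 1, Nat.lt_of_le_of_lt j.isLt hrm⟩)) :
    cycleGraph (m + r) ⊑ G := by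
  refine cycleGraph_isContained_of_adj_finRotate (Fin.interleave_injective hrm.le hg ha hga)
    fun i => ?_
  have hi := Fin.val_finRotate i
  have hne : i ≠ finRotate _ i := by
    intro h
    rw [← h] at hi
    split_ifs at hi <;> omega
  simp only [Fin.interleave]
  split_ifs at hi ⊢ <;> try omega
  · convert (hag ⟨(i : ℕ) / 2, by omega⟩).2 using 2
    simp only [Fin.ext_iff]
    omega
  · convert (hag ⟨(i : ℕ) / 2, by omega⟩).1.symm using 2 <;> simp only [Fin.ext_iff] <;> omega
  all_goals
    refine hgg _ _ fun heq => hne (Fin.ext ?_)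
    simp only [Fin.mk.injEq] at heq
    omega

theorem cycleGraph_isContained_of_two_mul_card_filter_lt {n q : ℕ} {G : SimpleGraph (Fin n)}
    (B : Finset (Fin n)) (hG : ∀ x y, x < y → x ∉ B → G.Adj x y)
    (hBn : ∀ b ∈ B, (b : ℕ) + 1 < n)
    (hB : ∀ j, q + 1 ≤ j → j ≤ n - 1 → 2 * #{b ∈ B | b.val < j} < j + q) (hnq : 2 ≤ n - q) :
    cycleGraph (n - q) ⊑ G := by
  have hk : 2 * #B < n - 1 + q := by
    have := hB (n - 1) (by omega) le_rfl
    rwa [filter_true_of_mem fun b hb => by have := hBn b hb; omega] at this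
  set r := #B - q
  set m := n - q - r
  have hm : m ≤ #Bᶜ := by rw [card_compl, Fintype.card_fin]; omega
  set g : Fin m → Fin n := fun i => Bᶜ.orderEmbOfFin rfl (Fin.castLE hm i)
  set a : Fin r → Fin n := fun j => B.orderEmbOfFin rfl ⟨q + j, by omega⟩
  have hgB : ∀ i, g i ∉ B := fun i => mem_compl.1 (orderEmbOfFin_mem _ _ _)
  have hgmono : StrictMono g := (Bᶜ.orderEmbOfFin rfl).strictMono.comp (Fin.strictMono_castLE hm)
  have hga : ∀ (i : Fin m) (j : Fin r), (i : ℕ) ≤ j + 1 → G.Adj (a j) (g i) := fun i j hij =>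
    (hG _ _ (Fin.orderEmbOfFin_compl_lt_orderEmbOfFin hBn hB _ _ hij) (hgB i)).symm
  rw [show n - q = m + r by omega]
  refine cycleGraph_isContained_interleave (by omega) (by omega) hgmono.injective
    (fun j j' h => ?_) (fun i j h => hgB i (h ▸ orderEmbOfFin_mem _ _ _)) (fun i j hij => ?_)
    fun j => ⟨hga _ j (by simp), hga _ j (by simp)⟩
  · exact Fin.ext (Nat.add_left_cancel (Fin.mk.inj ((B.orderEmbOfFin rfl).injective h)))
  · rcases hij.lt_or_gt with h | h
    · exact hG _ _ (hgmono h) (hgB i)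
    · exact (hG _ _ (hgmono h) (hgB j)).symm

end SimpleGraph

open SimpleGraph

/-- For an ordered edge coloring `φ` of `K_n` with inherited vertex coloring `φ'` and a
color `t` with `M_t(j) < (j+q)/2` for all `j ∈ [q+1, n-1]` (stated as
`2 * M_t(j) < j + q`), there exists a cycle of length `n - q` with no edge of color `t`. -/
theorem stmt_9 (n q k : ℕ) (hnq : 3 ≤ n - q)
    (φ : Sym2 (Fin n) → Fin k) (φ' : Fin n → Fin k)
    (hord : ∀ i j : Fin n, i < j → φ s(i, j) = φ' i)
    (t : Fin k)
    (hM : ∀ j : ℕ, q + 1 ≤ j → j ≤ n - 1 →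
      2 * (Finset.univ.filter (fun i : Fin n => i.val < j ∧ φ' i = t)).card < j + q) :
    ∃ (v : Fin n) (c : (⊤ : SimpleGraph (Fin n)).Walk v v),
      c.IsCycle ∧ c.length = n - q ∧ ∀ e ∈ c.edges, φ e ≠ t := by
  set G := fromEdgeSet {e | φ e ≠ t}
  set B : Finset (Fin n) := {i | i.val < n - 1 ∧ φ' i = t}
  have hG : ∀ x y, x < y → x ∉ B → G.Adj x y := by
    intro x y hxy hx
    have : x.val < n - 1 := by have := y.isLt; rw [Fin.lt_def] at hxy; omega
    simp only [B, mem_filter, mem_univ, true_and, not_and] at hx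
    exact (fromEdgeSet_adj _).2 ⟨(hord x y hxy).trans_ne (hx this), hxy.ne⟩
  have hB : ∀ j, q + 1 ≤ j → j ≤ n - 1 → 2 * #{b ∈ B | b.val < j} < j + q := by
    intro j hj hjn
    refine lt_of_eq_of_lt ?_ (hM j hj hjn)
    congr 2
    ext i
    simp only [B, mem_filter, mem_univ, true_and]
    exact ⟨fun ⟨⟨_, hi⟩, hij⟩ => ⟨hij, hi⟩, fun ⟨hij, hi⟩ => ⟨⟨by omega, hi⟩, hij⟩⟩
  obtain ⟨v, c, hc, hlen⟩ := (cycleGraph_isContained_iff (by omega)).1 <|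
    cycleGraph_isContained_of_two_mul_card_filter_lt B hG
      (fun b hb => by simp only [B, mem_filter] at hb; omega) hB (by omega)
  refine ⟨v, c.mapLe le_top, hc.mapLe le_top, by simpa using hlen, fun e he => ?_⟩
  rw [Walk.edges_mapLe_eq_edges] at he
  have := c.edges_subset_edgeSet he
  rw [edgeSet_fromEdgeSet] at this
  exact this.1
end

section
/- Suppose an edge coloring of K_n (n ≥ 7) with exactly three colors 1, 2, 3 partitions the vertices into sets A, B, C of sizes a ≤ b ≤ c with a ≥ 1 and a + b + c = n, such that every vertex in A is incident only to colors 1 and 2, every vertex in B only to colors 2 and 3, every vertex in C only to colors 1 and 3, every vertex has monochromatic degree (n−1)/2 in each of its two colors, all A–B edges have color 2, all B–C edges have color 3, and all A–C edges have color 1. Then K_n contains a spanning 2-regular subgraph missing some color; i.e., such a coloring is not R_0-polychromatic. -/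
open List

set_option linter.unusedSectionVars false

section Aux
variable {α : Type*}

/-- Interleave a list of "spine" vertices with items. -/
def weave : List α → List (List α) → List α
  | [], _ => []
  | x :: xs, [] => x :: xs
  | x :: xs, it :: its => x :: (it ++ weave xs its)

theorem weave_perm : ∀ (xs : List α) (its : List (List α)), its.length ≤ xs.length →
    (weave xs its).Perm (xs ++ its.flatten)
  | xs, [], _ => by cases xs <;> simp [weave]
  | [], it :: its, h => by simp at h
  | x :: xs, it :: its, h => by
    simp only [weave, flatten_cons]
    refine (List.Perm.cons x ((weave_perm xs its (by simpa using h)).append_left it)).trans ?_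
    rw [cons_append]
    refine List.Perm.cons x ?_
    rw [← append_assoc, ← append_assoc]
    exact (List.perm_append_comm).append_right _

theorem weave_head (x : α) (xs : List α) (its : List (List α)) :
    ∃ t, weave (x :: xs) its = x :: t := by
  cases its <;> simp [weave]

theorem chain'_of_mem_left {R : α → α → Prop} {Agood : Set α}
    (hL : ∀ u v, u ∈ Agood → R u v) :
    ∀ (xs : List α), (∀ x ∈ xs, x ∈ Agood) → xs.Chain' R
  | [], _ => by simp [List.Chain']
  | [x], _ => by simp [List.Chain']
  | x :: y :: xs, h => by
    rw [List.Chain', isChain_cons_cons]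
    exact ⟨hL x y (h x (by simp)), chain'_of_mem_left hL (y :: xs) fun z hz => h z (by simp [hz])⟩

theorem weave_chain {R : α → α → Prop} {Agood : Set α}
    (hL : ∀ u v, u ∈ Agood → R u v) (hR : ∀ u v, v ∈ Agood → R u v) :
    ∀ (xs : List α) (its : List (List α)), (∀ x ∈ xs, x ∈ Agood) →
      (∀ it ∈ its, it ≠ [] ∧ it.Chain' R) → its.length ≤ xs.length →
      (weave xs its).Chain' R ∧ (∀ y ∈ (weave xs its).head?, y ∈ Agood)
  | xs, [], hxs, _, _ => by
    cases xs with
    | nil => simp [weave, List.Chain']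
    | cons x xs =>
      refine ⟨?_, by simpa [weave] using hxs x (by simp)⟩
      show (x :: xs).Chain' R
      exact chain'_of_mem_left hL _ hxs
  | [], it :: its, _, _, h => by simp at h
  | x :: xs, it :: its, hxs, hits, h => by
    obtain ⟨hIH, hIHhead⟩ := weave_chain hL hR xs its (fun z hz => hxs z (by simp [hz]))
      (fun i hi => hits i (by simp [hi])) (by simpa using h)
    obtain ⟨hne, hch⟩ := hits it (by simp)
    have hxA : x ∈ Agood := hxs x (by simp)
    constructor
    · show ((x :: (it ++ weave xs its))).Chain' R
      rw [List.Chain', isChain_cons]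
      refine ⟨fun y _ => hL x y hxA, ?_⟩
      rw [isChain_append]
      exact ⟨hch, hIH, fun p _ q hq => hR p q (hIHhead q hq)⟩
    · show ∀ y ∈ (x :: (it ++ weave xs its)).head?, y ∈ Agood
      simpa using hxA

/-- All cyclically-consecutive pairs satisfy `R`. -/
def CycOK (R : α → α → Prop) (M : List α) : Prop :=
  ∀ i (h : i < M.length),
    R (M[i]) (M[(i + 1) % M.length]'(Nat.mod_lt _ (by omega)))

theorem cycOK_of_chain {R : α → α → Prop} {M : List α} (hne : M ≠ [])
    (hc : M.Chain' R) (hcl : R (M.getLast hne) (M.head hne)) : CycOK R M := by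
  intro i h
  rcases Nat.lt_or_ge (i + 1) M.length with h1 | h1
  · have : (i + 1) % M.length = i + 1 := Nat.mod_eq_of_lt h1
    have hch := List.isChain_iff_getElem.mp hc i (by omega)
    simp only [this]
    exact hch
  · have hi : i = M.length - 1 := by omega
    have h0 : (i + 1) % M.length = 0 := by
      have : i + 1 = M.length := by omega
      simp [this]
    have hlast : M.getLast hne = M[i] := by
      rw [List.getLast_eq_getElem]; congr 1; omega
    have hhead : M.head hne = M[(i + 1) % M.length]'(Nat.mod_lt _ (by omega)) := by
      rw [List.head_eq_getElem_zero hne]; congr 1; omega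
    rw [hlast, hhead] at hcl
    exact hcl

theorem cyc_facts [DecidableEq α] {R : α → α → Prop} {M : List α} (hnd : M.Nodup)
    (h3 : 3 ≤ M.length) (hcyc : CycOK R M) {v : α} (hv : v ∈ M) :
    M.formPerm v ≠ v ∧ M.formPerm (M.formPerm v) ≠ v ∧ R v (M.formPerm v) := by
  obtain ⟨i, h, rfl⟩ := List.getElem_of_mem hv
  have e1 : M.formPerm M[i] = M[(i + 1) % M.length]'(Nat.mod_lt _ (by omega)) :=
    List.formPerm_apply_getElem M hnd i h
  have h1 : (i + 1) % M.length < M.length := Nat.mod_lt _ (by omega)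
  have e2 : M.formPerm (M.formPerm M[i]) =
      M[(i + 2) % M.length]'(Nat.mod_lt _ (by omega)) := by
    rw [e1, List.formPerm_apply_getElem M hnd _ h1]
    congr 1
    rw [Nat.mod_add_mod]
  have hne1 : (i + 1) % M.length ≠ i := by
    rcases Nat.lt_or_ge (i + 1) M.length with hl | hl
    · rw [Nat.mod_eq_of_lt hl]; omega
    · have : i + 1 = M.length := by omega
      rw [this, Nat.mod_self]; omega
  have hne2 : (i + 2) % M.length ≠ i := by
    rcases Nat.lt_or_ge (i + 2) M.length with hl | hl
    · rw [Nat.mod_eq_of_lt hl]; omega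
    · rcases Nat.eq_or_lt_of_le hl with he | hl2
      · rw [← he, Nat.mod_self]; omega
      · have h2 : i + 2 = M.length + 1 := by omega
        have : (i + 2) % M.length = 1 := by
          rw [h2, Nat.add_mod_left]
          exact Nat.mod_eq_of_lt (by omega)
        rw [this]; omega
  refine ⟨?_, ?_, ?_⟩
  · rw [e1]
    exact fun hcon => hne1 ((hnd.getElem_inj_iff).mp hcon)
  · rw [e2]
    exact fun hcon => hne2 ((hnd.getElem_inj_iff).mp hcon)
  · rw [e1]; exact hcyc i h

theorem extend_path [DecidableEq α] {R : α → α → Prop} {S : Finset α} :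
    ∀ (k : ℕ) (P : List α), P ≠ [] → P.Nodup → (∀ x ∈ P, x ∈ S) → P.Chain' R →
      S.card - P.length ≤ k →
      ∃ Q : List α, Q ≠ [] ∧ Q.Nodup ∧ (∀ x ∈ Q, x ∈ S) ∧ Q.Chain' R ∧
        (∀ u ∈ S, ∀ h ∈ Q.head?, R u h → u ∈ Q) := by
  intro k
  induction k with
  | zero =>
    intro P hne hnd hsub hch hcard
    by_cases hmax : ∀ u ∈ S, ∀ h ∈ P.head?, R u h → u ∈ P
    · exact ⟨P, hne, hnd, hsub, hch, hmax⟩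
    · exfalso
      push_neg at hmax
      obtain ⟨u, hu, h, hh, hR, hnotin⟩ := hmax
      have hnd' : (u :: P).Nodup := by simp [hnd, hnotin]
      have hsub' : ∀ x ∈ u :: P, x ∈ S := by
        intro x hx
        rcases List.mem_cons.mp hx with rfl | hx
        · exact hu
        · exact hsub x hx
      have hlen : (u :: P).length ≤ S.card := by
        have h1 : (u :: P).toFinset ⊆ S := fun x hx => hsub' x (List.mem_toFinset.mp hx)
        have h2 := Finset.card_le_card h1
        rwa [List.toFinset_card_of_nodup hnd'] at h2
      simp at hlen
      omega
  | succ k ih =>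
    intro P hne hnd hsub hch hcard
    by_cases hmax : ∀ u ∈ S, ∀ h ∈ P.head?, R u h → u ∈ P
    · exact ⟨P, hne, hnd, hsub, hch, hmax⟩
    · push_neg at hmax
      obtain ⟨u, hu, h, hh, hR, hnotin⟩ := hmax
      have hh' : P.head? = some h := hh
      refine ih (u :: P) (by simp) (by simp [hnd, hnotin]) ?_ ?_ (by simp; omega)
      · intro x hx
        rcases List.mem_cons.mp hx with rfl | hx
        · exact hu
        · exact hsub x hx
      · rw [List.Chain', List.isChain_cons]
        exact ⟨fun y hy => by rw [hh'] at hy; rwa [Option.mem_some_iff.mp hy] at hR, hch⟩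

theorem exists_maximal_path [DecidableEq α] {R : α → α → Prop} {S : Finset α} {v₀ : α}
    (hv₀ : v₀ ∈ S) :
    ∃ Q : List α, Q ≠ [] ∧ Q.Nodup ∧ (∀ x ∈ Q, x ∈ S) ∧ Q.Chain' R ∧
      (∀ u ∈ S, ∀ h ∈ Q.head?, R u h → u ∈ Q) :=
  extend_path S.card [v₀] (by simp) (by simp) (by simpa using hv₀) (by simp [List.Chain']) (by simp)

theorem length_ge_of_maximal [DecidableEq α] {R : α → α → Prop} [DecidableRel R]
    {S : Finset α} {d : ℕ} {Q : List α} (hne : Q ≠ []) (hnd : Q.Nodup)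
    (hsub : ∀ x ∈ Q, x ∈ S) (hmax : ∀ u ∈ S, ∀ h ∈ Q.head?, R u h → u ∈ Q)
    (hreg : ∀ v ∈ S, (S.filter fun u => u ≠ v ∧ R u v).card = d) :
    d + 1 ≤ Q.length := by
  set h := Q.head hne with hh
  have hh? : Q.head? = some h := List.head?_eq_head hne
  have hhS : h ∈ S := hsub h (List.head_mem hne)
  have hNsub : (S.filter fun u => u ≠ h ∧ R u h) ⊆ Q.toFinset.erase h := by
    intro u hu
    simp only [Finset.mem_filter] at hu
    obtain ⟨huS, hune, huR⟩ := hu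
    exact Finset.mem_erase.mpr ⟨hune, List.mem_toFinset.mpr (hmax u huS h hh? huR)⟩
  have h1 := Finset.card_le_card hNsub
  rw [hreg h hhS] at h1
  have h2 : (Q.toFinset.erase h).card = Q.length - 1 := by
    rw [Finset.card_erase_of_mem (List.mem_toFinset.mpr (List.head_mem hne)),
      List.toFinset_card_of_nodup hnd]
  have h3 : 1 ≤ Q.length := List.length_pos_iff.mpr hne
  omega

theorem exists_good_cycle [DecidableEq α] {R : α → α → Prop} [DecidableRel R]
    {S : Finset α} {d : ℕ} {v₀ : α} (hv₀ : v₀ ∈ S) (hd : 2 ≤ d)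
    (hreg : ∀ v ∈ S, (S.filter fun u => u ≠ v ∧ R u v).card = d) :
    ∃ Q : List α, Q.Nodup ∧ (∀ x ∈ Q, x ∈ S) ∧ d + 1 ≤ Q.length ∧ CycOK R Q := by
  obtain ⟨P, hne, hnd, hsub, hch, hmax⟩ := exists_maximal_path (R := R) hv₀
  have hlen : d + 1 ≤ P.length := length_ge_of_maximal hne hnd hsub hmax hreg
  set h := P.head hne with hh
  have hh? : P.head? = some h := List.head?_eq_head hne
  have hhS : h ∈ S := hsub h (List.head_mem hne)
  set N := (S.filter fun u => u ≠ h ∧ R u h) with hN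
  have hNcard : N.card = d := hreg h hhS
  set I : Finset (Fin P.length) := Finset.univ.filter (fun i => P.get i ∈ N) with hI
  have hgetinj : Function.Injective P.get := List.nodup_iff_injective_get.mp hnd
  have himage : I.image P.get = N := by
    apply Finset.ext
    intro u
    simp only [Finset.mem_image, hI, Finset.mem_filter, Finset.mem_univ, true_and]
    constructor
    · rintro ⟨i, hi, rfl⟩; exact hi
    · intro hu
      have huP : u ∈ P := by
        refine hmax u ?_ h hh? ?_
        · exact (Finset.mem_filter.mp hu).1
        · exact (Finset.mem_filter.mp hu).2.2
      obtain ⟨i, hiP⟩ := List.get_of_mem huP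
      exact ⟨i, by rw [hiP]; exact hu, hiP⟩
  have hIcard : I.card = d := by
    rw [← hNcard, ← himage, Finset.card_image_of_injective _ hgetinj]
  set J : Finset ℕ := I.image Fin.val with hJ
  have hJcard : J.card = d := by
    rw [hJ, Finset.card_image_of_injective _ Fin.val_injective, hIcard]
  have hJne : J.Nonempty := by
    rw [← Finset.card_pos, hJcard]; omega
  set j := J.max' hJne with hj
  have hjI : j ∈ J := Finset.max'_mem _ _
  have hjpos : ∀ i ∈ J, 1 ≤ i := by
    intro i hi
    rw [hJ] at hi
    obtain ⟨i', hi', rfl⟩ := Finset.mem_image.mp hi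
    rw [hI, Finset.mem_filter] at hi'
    have hneh : P.get i' ≠ h := (Finset.mem_filter.mp hi'.2).2.1
    by_contra hcon
    apply hneh
    have hz : i'.val = 0 := by omega
    have hp0 : 0 < P.length := List.length_pos_iff.mpr hne
    have : P.get i' = P[0]'hp0 := by
      rw [List.get_eq_getElem]; congr 1
    rw [this, hh, List.head_eq_getElem_zero hne]
  have hjd : d ≤ j := by
    have hsubJ : J ⊆ Finset.Icc 1 j := by
      intro i hi
      exact Finset.mem_Icc.mpr ⟨hjpos i hi, Finset.le_max' _ _ hi⟩
    have := Finset.card_le_card hsubJ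
    rw [hJcard, Nat.card_Icc] at this
    omega
  have hjlt : j < P.length := by
    obtain ⟨i', _, hival⟩ := Finset.mem_image.mp hjI
    have := i'.isLt; omega
  refine ⟨P.take (j + 1), hnd.sublist (List.take_sublist _ _),
    fun x hx => hsub x (List.mem_of_mem_take hx), ?_, ?_⟩
  · rw [List.length_take]; omega
  · have hlenQ : (P.take (j + 1)).length = j + 1 := by rw [List.length_take]; omega
    have hneQ : P.take (j + 1) ≠ [] := by
      intro hcon; rw [hcon] at hlenQ; simp at hlenQ
    apply cycOK_of_chain hneQ (List.IsChain.take hch _)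
    have hlast : (P.take (j + 1)).getLast hneQ = P[j] := by
      rw [List.getLast_eq_getElem, List.getElem_take]
      congr 1
      omega
    have hhead : (P.take (j + 1)).head hneQ = h := by
      rw [List.head_eq_getElem_zero hneQ, List.getElem_take]
      rw [hh, List.head_eq_getElem_zero hne]
    rw [hlast, hhead]
    obtain ⟨i', hi', hival⟩ := Finset.mem_image.mp hjI
    rw [hI, Finset.mem_filter] at hi'
    have hRN : R (P.get i') h := (Finset.mem_filter.mp hi'.2).2.2
    have : P.get i' = P[j] := by
      rw [List.get_eq_getElem]
      congr 1
    rwa [this] at hRN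

end Aux

section Parity

/-- The graph of `col`-colored edges inside `C`. -/
def colorGraph {n : ℕ} (φ : Sym2 (Fin n) → Fin 3) (C : Finset (Fin n)) (col : Fin 3) :
    SimpleGraph (Fin n) where
  Adj u v := u ≠ v ∧ u ∈ C ∧ v ∈ C ∧ φ s(u, v) = col
  symm := by
    constructor
    intro u v ⟨h1, h2, h3, h4⟩
    exact ⟨h1.symm, h3, h2, by rwa [Sym2.eq_swap]⟩
  loopless := ⟨fun u h => h.1 rfl⟩

instance {n : ℕ} (φ : Sym2 (Fin n) → Fin 3) (C : Finset (Fin n)) (col : Fin 3) :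
    DecidableRel (colorGraph φ C col).Adj :=
  fun u v => decidable_of_iff (u ≠ v ∧ u ∈ C ∧ v ∈ C ∧ φ s(u, v) = col) Iff.rfl

theorem even_sum_inner_deg {n : ℕ} (φ : Sym2 (Fin n) → Fin 3) (C : Finset (Fin n))
    (col : Fin 3) :
    Even (∑ v ∈ C, (C.filter fun u => u ≠ v ∧ φ s(u, v) = col).card) := by
  have h := SimpleGraph.sum_degrees_eq_twice_card_edges (colorGraph φ C col)
  have hfil : ∀ v : Fin n, (colorGraph φ C col).degree v
      = (Finset.univ.filter ((colorGraph φ C col).Adj v)).card := by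
    intro v
    show ((colorGraph φ C col).neighborFinset v).card = _
    rw [SimpleGraph.neighborFinset_eq_filter]
  have hdegeq : ∀ v ∈ C, (C.filter fun u => u ≠ v ∧ φ s(u, v) = col).card
      = (colorGraph φ C col).degree v := by
    intro v hv
    rw [hfil v]
    congr 1
    apply Finset.ext
    intro u
    rw [Finset.mem_filter, Finset.mem_filter]
    constructor
    · rintro ⟨huC, hne, hcol⟩
      refine ⟨Finset.mem_univ u, ?_⟩
      exact show v ≠ u ∧ v ∈ C ∧ u ∈ C ∧ φ s(v, u) = col from
        ⟨hne.symm, hv, huC, by rwa [Sym2.eq_swap] at hcol⟩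
    · intro h'
      obtain ⟨hne, -, huC, hcol⟩ : v ≠ u ∧ v ∈ C ∧ u ∈ C ∧ φ s(v, u) = col := h'.2
      exact ⟨huC, hne.symm, by rwa [Sym2.eq_swap] at hcol⟩
  have hzero : ∀ v ∈ Finset.univ, v ∉ C → (colorGraph φ C col).degree v = 0 := by
    intro v _ hv
    rw [hfil v, Finset.card_eq_zero]
    apply Finset.filter_false_of_mem
    intro u _
    intro h'
    obtain ⟨-, hvC, -, -⟩ : v ≠ u ∧ v ∈ C ∧ u ∈ C ∧ φ s(v, u) = col := h'
    exact hv hvC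
  have h2 : ∑ v ∈ C, (C.filter fun u => u ≠ v ∧ φ s(u, v) = col).card
      = ∑ v : Fin n, (colorGraph φ C col).degree v :=
    (Finset.sum_congr rfl hdegeq).trans (Finset.sum_subset (Finset.subset_univ C) hzero)
  rw [h2, h]
  exact even_two_mul _

end Parity

/-- A 3-coloring of `K_n` (`n ≥ 7` odd) with the structure: vertex classes `A, B, C` of
sizes `a ≤ b ≤ c`, `a ≥ 1`, `A`–`B` edges of color 2, `B`–`C` edges of color 3, `A`–`C`
edges of color 1, internal edges restricted as stated, and every vertex having
monochromatic degree `(n-1)/2` in each of its colors, is not `R_0`-polychromatic: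
some 2-factor misses one of the colors present. -/
theorem stmt_10 (n : ℕ) (hn : 7 ≤ n) (hodd : Odd n)
    (φ : Sym2 (Fin n) → Fin 3)
    (A B C : Finset (Fin n)) (a b c : ℕ)
    (hA : A.card = a) (hB : B.card = b) (hC : C.card = c)
    (hab : a ≤ b) (hbc : b ≤ c) (ha : 1 ≤ a) (hsum : a + b + c = n)
    (hdAB : Disjoint A B) (hdAC : Disjoint A C) (hdBC : Disjoint B C)
    (hcover : A ∪ B ∪ C = Finset.univ)
    (hAB : ∀ x ∈ A, ∀ y ∈ B, φ s(x, y) = 1)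
    (hBC : ∀ x ∈ B, ∀ y ∈ C, φ s(x, y) = 2)
    (hAC : ∀ x ∈ A, ∀ y ∈ C, φ s(x, y) = 0)
    (hAint : ∀ x ∈ A, ∀ y ∈ A, x ≠ y → φ s(x, y) = 0 ∨ φ s(x, y) = 1)
    (hBint : ∀ x ∈ B, ∀ y ∈ B, x ≠ y → φ s(x, y) = 1 ∨ φ s(x, y) = 2)
    (hCint : ∀ x ∈ C, ∀ y ∈ C, x ≠ y → φ s(x, y) = 0 ∨ φ s(x, y) = 2)
    (hdeg : ∀ v : Fin n, ∀ col : Fin 3,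
      (∃ u : Fin n, u ≠ v ∧ φ s(u, v) = col) →
      2 * ({u : Fin n | u ≠ v ∧ φ s(u, v) = col}.ncard) = n - 1) :
    ∃ H : SimpleGraph (Fin n),
      (∀ v : Fin n, (H.neighborSet v).ncard = 2) ∧
      ∃ col : Fin 3, (∃ e : Sym2 (Fin n), ¬ e.IsDiag ∧ φ e = col) ∧
        ∀ e ∈ H.edgeSet, φ e ≠ col := by
  classical
  -- basic numerology
  obtain ⟨m, hm⟩ : ∃ m, n = 2 * m + 1 := by
    obtain ⟨k, hk⟩ := hodd; exact ⟨k, by omega⟩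
  have hm3 : 3 ≤ m := by omega
  -- nonemptiness
  have hAne : A.Nonempty := by rw [← Finset.card_pos, hA]; omega
  have hBne : B.Nonempty := by rw [← Finset.card_pos, hB]; omega
  have hCne : C.Nonempty := by rw [← Finset.card_pos, hC]; omega
  obtain ⟨a₀, ha₀⟩ := hAne
  obtain ⟨b₀, hb₀⟩ := hBne
  obtain ⟨c₀, hc₀⟩ := hCne
  -- degree in finset form
  have hdeg' : ∀ v : Fin n, ∀ col : Fin 3, (∃ u : Fin n, u ≠ v ∧ φ s(u, v) = col) →
      (Finset.univ.filter fun u => u ≠ v ∧ φ s(u, v) = col).card = m := by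
    intro v col hex
    have h1 := hdeg v col hex
    have h2 : {u : Fin n | u ≠ v ∧ φ s(u, v) = col}
        = ↑(Finset.univ.filter fun u => u ≠ v ∧ φ s(u, v) = col) := by
      ext u; simp
    rw [h2, Set.ncard_coe_finset] at h1
    omega
  -- B-internal color-1 degrees
  have hBdeg : ∀ v ∈ B, (B.filter fun u => u ≠ v ∧ φ s(u, v) = 1).card = m - a := by
    intro v hv
    have hne : a₀ ≠ v := fun hcon => (Finset.disjoint_left.mp hdAB ha₀) (hcon ▸ hv)
    have h1 := hdeg' v 1 ⟨a₀, hne, hAB a₀ ha₀ v hv⟩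
    rw [← hcover, Finset.filter_union, Finset.filter_union] at h1
    have hAf : (A.filter fun u => u ≠ v ∧ φ s(u, v) = 1) = A := by
      apply Finset.filter_true_of_mem
      intro u hu
      exact ⟨fun hcon => (Finset.disjoint_left.mp hdAB hu) (hcon ▸ hv), hAB u hu v hv⟩
    have hCf : (C.filter fun u => u ≠ v ∧ φ s(u, v) = 1) = ∅ := by
      apply Finset.filter_false_of_mem
      intro u hu
      rintro ⟨-, hφ⟩
      have h2 := hBC v hv u hu
      rw [Sym2.eq_swap] at h2
      exact absurd (hφ.symm.trans h2) (by decide)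
    rw [hAf, hCf, Finset.union_empty] at h1
    rw [Finset.card_union_of_disjoint (hdAB.mono_right (Finset.filter_subset _ _)), hA] at h1
    omega
  -- C-internal color-0 degrees
  have hCdeg : ∀ v ∈ C, (C.filter fun u => u ≠ v ∧ φ s(u, v) = 0).card = m - a := by
    intro v hv
    have hne : a₀ ≠ v := fun hcon => (Finset.disjoint_left.mp hdAC ha₀) (hcon ▸ hv)
    have h1 := hdeg' v 0 ⟨a₀, hne, hAC a₀ ha₀ v hv⟩
    rw [← hcover, Finset.filter_union, Finset.filter_union] at h1
    have hAf : (A.filter fun u => u ≠ v ∧ φ s(u, v) = 0) = A := by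
      apply Finset.filter_true_of_mem
      intro u hu
      exact ⟨fun hcon => (Finset.disjoint_left.mp hdAC hu) (hcon ▸ hv), hAC u hu v hv⟩
    have hBf : (B.filter fun u => u ≠ v ∧ φ s(u, v) = 0) = ∅ := by
      apply Finset.filter_false_of_mem
      intro u hu
      rintro ⟨-, hφ⟩
      exact absurd (hφ.symm.trans (hBC u hu v hv)) (by decide)
    rw [hAf, hBf, Finset.union_empty] at h1
    rw [Finset.card_union_of_disjoint (hdAC.mono_right (Finset.filter_subset _ _)), hA] at h1
    omega
  have ham : a + 1 ≤ m := by omega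
  set δ := m - a with hδ
  -- δ ≥ 2, via parity when δ = 1
  have hδ2 : 2 ≤ δ := by
    rcases Nat.lt_or_ge δ 2 with hlt | h; swap
    · exact h
    · exfalso
      have hδ1 : δ = 1 := by omega
      have hc3 : c = 3 := by omega
      have heven := even_sum_inner_deg φ C 0
      rw [Finset.sum_congr rfl (fun v hv => hCdeg v hv)] at heven
      rw [Finset.sum_const, smul_eq_mul, hC] at heven
      rw [hc3, hδ1] at heven
      simp at heven
      obtain ⟨k, hk⟩ := heven
      omega
  -- the long path in C (color 0)
  obtain ⟨P, hPne, hPnd, hPsub, hPch, hPmax⟩ :=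
    exists_maximal_path (R := fun u v => φ s(u, v) = 0) (S := C) hc₀
  have hPlen : δ + 1 ≤ P.length := length_ge_of_maximal hPne hPnd hPsub hPmax hCdeg
  -- the cycle in B (color 1)
  obtain ⟨Q, hQnd, hQsub, hQlen, hQcyc⟩ :=
    exists_good_cycle (R := fun u v => φ s(u, v) = 1) (S := B) hb₀ hδ2 hBdeg
  have hQ3 : 3 ≤ Q.length := by omega
  -- the "avoids color 2" relation
  set Rg : Fin n → Fin n → Prop := fun u v => u ≠ v → φ s(u, v) ≠ 2 with hRg
  have hmemU : ∀ v : Fin n, v ∈ A ∨ v ∈ B ∨ v ∈ C := by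
    intro v
    have hvv : v ∈ A ∪ B ∪ C := by rw [hcover]; exact Finset.mem_univ v
    simpa [Finset.mem_union, or_assoc] using hvv
  have hAgoodL : ∀ u v : Fin n, u ∈ (↑A : Set (Fin n)) → Rg u v := by
    intro u v hu hne
    rcases hmemU v with hv | hv | hv
    · rcases hAint u hu v hv hne with h | h <;> (rw [h]; decide)
    · rw [hAB u hu v hv]; decide
    · rw [hAC u hu v hv]; decide
  have hAgoodR : ∀ u v : Fin n, v ∈ (↑A : Set (Fin n)) → Rg u v := by
    intro u v hv hne
    show φ s(u, v) ≠ 2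
    rw [Sym2.eq_swap]
    exact hAgoodL v u hv hne.symm
  -- leftovers
  set rest := ((B \ Q.toFinset) ∪ (C \ P.toFinset)).toList with hrestdef
  set its : List (List (Fin n)) := P :: rest.map (fun u => [u]) with hitsdef
  set xs := A.toList with hxsdef
  have hxslen : xs.length = a := by rw [hxsdef, Finset.length_toList, hA]
  have hQsubF : Q.toFinset ⊆ B := fun x hx => hQsub x (List.mem_toFinset.mp hx)
  have hPsubF : P.toFinset ⊆ C := fun x hx => hPsub x (List.mem_toFinset.mp hx)
  have hQcard : Q.toFinset.card = Q.length := List.toFinset_card_of_nodup hQnd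
  have hPcard : P.toFinset.card = P.length := List.toFinset_card_of_nodup hPnd
  have hQb : Q.length ≤ b := by
    have := Finset.card_le_card hQsubF
    rwa [hQcard, hB] at this
  have hPc : P.length ≤ c := by
    have := Finset.card_le_card hPsubF
    rwa [hPcard, hC] at this
  have hd1 : Disjoint (B \ Q.toFinset) (C \ P.toFinset) :=
    hdBC.mono (Finset.sdiff_subset) (Finset.sdiff_subset)
  have hrestlen : rest.length = (b - Q.length) + (c - P.length) := by
    rw [hrestdef, Finset.length_toList, Finset.card_union_of_disjoint hd1,
      Finset.card_sdiff_of_subset hQsubF, Finset.card_sdiff_of_subset hPsubF, hB, hC, hQcard, hPcard]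
  have hitslen : its.length ≤ xs.length := by
    rw [hitsdef, hxslen]
    simp only [List.length_cons, List.length_map]
    omega
  have hmemrest : ∀ x : Fin n, x ∈ rest ↔ (x ∈ B ∧ x ∉ Q) ∨ (x ∈ C ∧ x ∉ P) := by
    intro x
    rw [hrestdef, Finset.mem_toList, Finset.mem_union, Finset.mem_sdiff, Finset.mem_sdiff,
      List.mem_toFinset, List.mem_toFinset]
  -- the big cycle list
  set L := weave xs its with hLdef
  have hflat : its.flatten = P ++ rest := by
    rw [hitsdef, List.flatten_cons]
    congr 1
    induction rest with
    | nil => simp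
    | cons y ys ih => simp_all
  have hLperm : L.Perm (xs ++ (P ++ rest)) := by
    have h1 := weave_perm xs its hitslen
    rwa [hflat] at h1
  have hmemL : ∀ x : Fin n, x ∈ L ↔ x ∈ A ∨ x ∈ P ∨ x ∈ rest := by
    intro x
    rw [hLperm.mem_iff, List.mem_append, List.mem_append, hxsdef, Finset.mem_toList]
  have hLnd : L.Nodup := by
    rw [hLperm.nodup_iff, List.nodup_append]
    refine ⟨by rw [hxsdef]; exact A.nodup_toList, ?_, ?_⟩
    · rw [List.nodup_append]
      refine ⟨hPnd, by rw [hrestdef]; exact Finset.nodup_toList _, ?_⟩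
      intro x hxP y hxrest hxy; subst hxy
      rcases (hmemrest x).mp hxrest with ⟨hxB, -⟩ | ⟨-, hxnP⟩
      · exact (Finset.disjoint_left.mp hdBC hxB) (hPsub x hxP)
      · exact hxnP hxP
    · intro x hxxs y hxother hxy; subst hxy
      have hxA : x ∈ A := by rw [hxsdef] at hxxs; exact Finset.mem_toList.mp hxxs
      rcases List.mem_append.mp hxother with hxP | hxrest
      · exact (Finset.disjoint_left.mp hdAC hxA) (hPsub x hxP)
      · rcases (hmemrest x).mp hxrest with ⟨hxB, -⟩ | ⟨hxC, -⟩
        · exact (Finset.disjoint_left.mp hdAB hxA) hxB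
        · exact (Finset.disjoint_left.mp hdAC hxA) hxC
  have hPneL : P ≠ [] := hPne
  have hweave := weave_chain (Agood := (↑A : Set (Fin n))) hAgoodL hAgoodR xs its
    (fun x hx => by rw [hxsdef] at hx; exact Finset.mem_toList.mp hx)
    (by
      intro it hit
      rcases List.mem_cons.mp hit with rfl | hit'
      · refine ⟨hPneL, ?_⟩
        refine List.IsChain.imp ?_ hPch
        intro u v huv hne
        rw [huv]; decide
      · obtain ⟨u, -, rfl⟩ := List.mem_map.mp hit'
        exact ⟨by simp, by simp [List.Chain']⟩)
    hitslen
  have hxsne : xs ≠ [] := by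
    intro hcon
    rw [hcon] at hxslen
    simp at hxslen
    omega
  have hLlen : L.length = xs.length + (P.length + rest.length) := by
    have := hLperm.length_eq
    simpa using this
  have hLne : L ≠ [] := by
    intro hcon
    have h0 : L.length = 0 := by rw [hcon]; rfl
    rw [hLlen, hxslen] at h0
    omega
  have hLheadA : L.head hLne ∈ (↑A : Set (Fin n)) := by
    exact hweave.2 (L.head hLne) (by rw [List.head?_eq_head hLne]; rfl)
  have hLcyc : CycOK Rg L :=
    cycOK_of_chain hLne hweave.1 (hAgoodR _ _ hLheadA)
  have hL3 : 3 ≤ L.length := by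
    rw [hLlen]
    omega
  have hQcycRg : CycOK Rg Q := by
    intro i h
    intro hne
    rw [hQcyc i h]
    decide
  -- partition facts
  have hQL : ∀ v : Fin n, v ∈ Q → v ∉ L := by
    intro v hv hvL
    have hvB : v ∈ B := hQsub v hv
    rcases (hmemL v).mp hvL with hvA | hvP | hvrest
    · exact (Finset.disjoint_left.mp hdAB hvA) hvB
    · exact (Finset.disjoint_left.mp hdBC hvB) (hPsub v hvP)
    · rcases (hmemrest v).mp hvrest with ⟨-, hnQ⟩ | ⟨hvC, -⟩
      · exact hnQ hv
      · exact (Finset.disjoint_left.mp hdBC hvB) hvC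
  have hcoverLQ : ∀ v : Fin n, v ∈ L ∨ v ∈ Q := by
    intro v
    rcases hmemU v with hv | hv | hv
    · exact Or.inl ((hmemL v).mpr (Or.inl hv))
    · by_cases hq : v ∈ Q
      · exact Or.inr hq
      · exact Or.inl ((hmemL v).mpr (Or.inr (Or.inr ((hmemrest v).mpr (Or.inl ⟨hv, hq⟩)))))
    · by_cases hp : v ∈ P
      · exact Or.inl ((hmemL v).mpr (Or.inr (Or.inl hp)))
      · exact Or.inl ((hmemL v).mpr (Or.inr (Or.inr ((hmemrest v).mpr (Or.inr ⟨hv, hp⟩)))))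
  -- the permutation
  set σ : Equiv.Perm (Fin n) := L.formPerm * Q.formPerm with hσdef
  have hkey : ∀ v : Fin n, σ v ≠ v ∧ σ (σ v) ≠ v ∧ φ s(v, σ v) ≠ 2 := by
    intro v
    rcases hcoverLQ v with hvL | hvQ
    · have hvnQ : v ∉ Q := fun h => hQL v h hvL
      have e0 : σ v = L.formPerm v := by
        rw [hσdef, Equiv.Perm.mul_apply, List.formPerm_apply_of_notMem hvnQ]
      obtain ⟨f1, f2, f3⟩ := cyc_facts hLnd hL3 hLcyc hvL
      have hσvL : L.formPerm v ∈ L := List.formPerm_apply_mem_of_mem hvL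
      have hσvnQ : L.formPerm v ∉ Q := fun h => hQL _ h hσvL
      have e1 : σ (σ v) = L.formPerm (L.formPerm v) := by
        rw [e0, hσdef, Equiv.Perm.mul_apply, List.formPerm_apply_of_notMem hσvnQ]
      refine ⟨by rw [e0]; exact f1, by rw [e1]; exact f2, ?_⟩
      rw [e0]
      exact f3 f1.symm
    · have hvnL : v ∉ L := hQL v hvQ
      have e0 : σ v = Q.formPerm v := by
        have hQv : Q.formPerm v ∈ Q := List.formPerm_apply_mem_of_mem hvQ
        have hQvnL : Q.formPerm v ∉ L := hQL _ hQv
        rw [hσdef, Equiv.Perm.mul_apply, List.formPerm_apply_of_notMem hQvnL]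
      obtain ⟨f1, f2, f3⟩ := cyc_facts hQnd hQ3 hQcycRg hvQ
      have hQv : Q.formPerm v ∈ Q := List.formPerm_apply_mem_of_mem hvQ
      have hQQv : Q.formPerm (Q.formPerm v) ∈ Q := List.formPerm_apply_mem_of_mem hQv
      have e1 : σ (σ v) = Q.formPerm (Q.formPerm v) := by
        rw [e0, hσdef, Equiv.Perm.mul_apply, List.formPerm_apply_of_notMem (hQL _ hQQv)]
      refine ⟨by rw [e0]; exact f1, by rw [e1]; exact f2, ?_⟩
      rw [e0]
      exact f3 f1.symm
  -- the 2-factor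
  set Hg : SimpleGraph (Fin n) :=
    { Adj := fun u v => u ≠ v ∧ (σ u = v ∨ σ v = u)
      symm := ⟨fun u v h => ⟨h.1.symm, h.2.symm⟩⟩
      loopless := ⟨fun u h => h.1 rfl⟩ } with hHgdef
  refine ⟨Hg, ?_, ?_⟩
  · intro v
    have hset : Hg.neighborSet v = {σ v, σ.symm v} := by
      ext u
      show v ≠ u ∧ (σ v = u ∨ σ u = v) ↔ _
      constructor
      · rintro ⟨hne, h | h⟩
        · left; exact h.symm
        · right; exact Set.mem_singleton_iff.mpr ((Equiv.eq_symm_apply σ).mpr h)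
      · intro h
        rcases h with h | h
        · subst h
          exact ⟨((hkey v).1).symm, Or.inl rfl⟩
        · subst h
          refine ⟨?_, Or.inr (σ.apply_symm_apply v)⟩
          intro hcon
          apply (hkey v).1
          conv_lhs => rw [hcon]
          exact σ.apply_symm_apply v
    rw [hset, Set.ncard_pair]
    intro hcon
    apply (hkey v).2.1
    have := congrArg σ hcon
    rwa [σ.apply_symm_apply] at this
  · refine ⟨2, ⟨s(b₀, c₀), ?_, hBC b₀ hb₀ c₀ hc₀⟩, ?_⟩
    · rw [Sym2.mk_isDiag_iff]
      intro hcon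
      exact (Finset.disjoint_left.mp hdBC hb₀) (hcon ▸ hc₀)
    · intro e he
      induction e using Sym2.ind with
      | _ u v =>
        rw [SimpleGraph.mem_edgeSet] at he
        obtain ⟨hne, h | h⟩ := he
        · rw [← h]
          exact (hkey u).2.2
        · rw [Sym2.eq_swap, ← h]
          exact (hkey v).2.2
end

section
/- There is no edge coloring of K_n with at least 4 colors in which every vertex has monochromatic degree exactly (n−1)/2 in each of exactly two colors. -/
/-- If `a`, `b`, `z` all lie in the two-element set `{p, q}` and `a ≠ b`,
then `z = a` or `z = b`. -/
lemma stmt_11_mem_pair_cases {p q a b z : ℕ} (hpq : p ≠ q) (ha : a = p ∨ a = q)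
    (hb : b = p ∨ b = q) (hab : a ≠ b) (hz : z = p ∨ z = q) : z = a ∨ z = b := by
  rcases ha with rfl | rfl <;> rcases hb with h | h <;> rcases hz with rfl | rfl <;> omega

/-- Three pairwise distinct elements cannot all lie in a two-element set. -/
lemma stmt_11_not_three {p q a b c : ℕ} (hpq : p ≠ q) (ha : a = p ∨ a = q)
    (hb : b = p ∨ b = q) (hc : c = p ∨ c = q) (hab : a ≠ b) (hac : a ≠ c) (hbc : b ≠ c) :
    False := by
  rcases ha with rfl | rfl <;> rcases hb with h | h <;> rcases hc with h' | h' <;> omega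

/-- There is no edge coloring of `K_n` (`n` odd) with at least 4 colors in which every
vertex is incident with exactly two colors, having monochromatic degree exactly
`(n-1)/2` in each (stated as `2 * degree = n - 1`). -/
theorem stmt_11 (n : ℕ) (hodd : Odd n) (φ : Sym2 (Fin n) → ℕ)
    (hcolors : ∃ c1 c2 c3 c4 : ℕ,
      c1 ≠ c2 ∧ c1 ≠ c3 ∧ c1 ≠ c4 ∧ c2 ≠ c3 ∧ c2 ≠ c4 ∧ c3 ≠ c4 ∧
      (∃ e : Sym2 (Fin n), ¬ e.IsDiag ∧ φ e = c1) ∧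
      (∃ e : Sym2 (Fin n), ¬ e.IsDiag ∧ φ e = c2) ∧
      (∃ e : Sym2 (Fin n), ¬ e.IsDiag ∧ φ e = c3) ∧
      (∃ e : Sym2 (Fin n), ¬ e.IsDiag ∧ φ e = c4))
    (hvert : ∀ v : Fin n, ∃ c1 c2 : ℕ, c1 ≠ c2 ∧
      2 * ({u : Fin n | u ≠ v ∧ φ s(u, v) = c1}.ncard) = n - 1 ∧
      2 * ({u : Fin n | u ≠ v ∧ φ s(u, v) = c2}.ncard) = n - 1 ∧
      ∀ u : Fin n, u ≠ v → φ s(u, v) = c1 ∨ φ s(u, v) = c2) :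
    False := by
  classical
  choose f g hfg h1 h2 hall using hvert
  have key : ∀ u v : Fin n, u ≠ v →
      (φ s(u,v) = f v ∨ φ s(u,v) = g v) ∧ (φ s(u,v) = f u ∨ φ s(u,v) = g u) := by
    intro u v huv
    refine ⟨hall v u huv, ?_⟩
    have h := hall u v (Ne.symm huv)
    rwa [Sym2.eq_swap] at h
  have app : ∀ (e : Sym2 (Fin n)), ¬ e.IsDiag → ∃ v, φ e = f v ∨ φ e = g v := by
    intro e
    induction e using Sym2.ind with
    | _ a b =>
      intro hd
      exact ⟨b, (key a b (by simpa using hd)).1⟩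
  obtain ⟨c1, c2, c3, c4, h12, h13, h14, h23, h24, h34, he1, he2, he3, he4⟩ := hcolors
  have app' : ∀ c, (∃ e : Sym2 (Fin n), ¬ e.IsDiag ∧ φ e = c) → ∃ v, c = f v ∨ c = g v := by
    rintro c ⟨e, hd, rfl⟩
    exact app e hd
  obtain ⟨v1, hv1⟩ := app' c1 he1
  obtain ⟨v2, hv2⟩ := app' c2 he2
  obtain ⟨v3, hv3⟩ := app' c3 he3
  obtain ⟨v4, hv4⟩ := app' c4 he4
  -- pigeonhole: find two distinct appearing colors d, e outside {f v1, g v1}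
  set S : Finset ℕ := {c1, c2, c3, c4} with hSdef
  have hS : S.card = 4 := by
    simp [hSdef, Finset.card_insert_of_notMem, h12, h13, h14, h23, h24, h34]
  have hsub : ({f v1, g v1} : Finset ℕ).card ≤ 2 := by
    apply le_trans (Finset.card_insert_le _ _); simp
  have hT : 1 < (S \ {f v1, g v1}).card := by
    have := Finset.le_card_sdiff ({f v1, g v1} : Finset ℕ) S
    omega
  obtain ⟨d, hdT, e, heT, hde⟩ := Finset.one_lt_card.mp hT
  simp only [Finset.mem_sdiff, hSdef, Finset.mem_insert, Finset.mem_singleton, not_or] at hdT heT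
  obtain ⟨hd14, hdnf, hdng⟩ := hdT
  obtain ⟨he14, henf, heng⟩ := heT
  clear hS hsub hT hSdef S
  have hu' : ∃ u, d = f u ∨ d = g u := by
    rcases hd14 with rfl | rfl | rfl | rfl
    exacts [⟨v1, hv1⟩, ⟨v2, hv2⟩, ⟨v3, hv3⟩, ⟨v4, hv4⟩]
  have hw' : ∃ w, e = f w ∨ e = g w := by
    rcases he14 with rfl | rfl | rfl | rfl
    exacts [⟨v1, hv1⟩, ⟨v2, hv2⟩, ⟨v3, hv3⟩, ⟨v4, hv4⟩]
  obtain ⟨u, hu⟩ := hu'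
  obtain ⟨w, hw⟩ := hw'
  clear hv1 hv2 hv3 hv4 hd14 he14 he1 he2 he3 he4 app app' hall h12 h13 h14 h23 h24 h34
  have huv1 : u ≠ v1 := by rintro rfl; rcases hu with h | h; exacts [hdnf h, hdng h]
  have hwv1 : w ≠ v1 := by rintro rfl; rcases hw with h | h; exacts [henf h, heng h]
  obtain ⟨hx1, hx2⟩ := key u v1 huv1
  set x := φ s(u, v1) with hxdef
  obtain ⟨hy1, hy2⟩ := key w v1 hwv1
  set y := φ s(w, v1) with hydef
  have hfgu := hfg u
  have hfgw := hfg w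
  have hfgv1 := hfg v1
  have hdx : d ≠ x := by rintro rfl; rcases hx1 with h | h; exacts [hdnf h, hdng h]
  have hey : e ≠ y := by rintro rfl; rcases hy1 with h | h; exacts [henf h, heng h]
  have hex : e ≠ x := by rintro rfl; rcases hx1 with h | h; exacts [henf h, heng h]
  have hdy : d ≠ y := by rintro rfl; rcases hy1 with h | h; exacts [hdnf h, hdng h]
  have huw : u ≠ w := by
    rintro rfl
    exact stmt_11_not_three hfgu hu hw hx2 hde hdx hex
  obtain ⟨hz1, hz2⟩ := key u w huw
  have hzu : φ s(u, w) = d ∨ φ s(u, w) = x := stmt_11_mem_pair_cases hfgu hu hx2 hdx hz2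
  have hzw : φ s(u, w) = e ∨ φ s(u, w) = y := stmt_11_mem_pair_cases hfgw hw hy2 hey hz1
  have hxy : x = y := by
    rcases hzu with h | h
    · rcases hzw with h' | h'
      · exact absurd (h.symm.trans h') hde
      · exact absurd (h.symm.trans h') hdy
    · rcases hzw with h' | h'
      · exact absurd (h.symm.trans h') (Ne.symm hex)
      · exact h.symm.trans h'
  -- x is in every vertex's pair
  have hcom : ∀ t : Fin n, x = f t ∨ x = g t := by
    intro t
    by_contra hxt
    push_neg at hxt
    obtain ⟨hxt1, hxt2⟩ := hxt
    have htu : t ≠ u := by rintro rfl; rcases hx2 with h | h; exacts [hxt1 h, hxt2 h]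
    have htw : t ≠ w := by
      rintro rfl; rw [hxy] at hxt1 hxt2; rcases hy2 with h | h; exacts [hxt1 h, hxt2 h]
    have htv1 : t ≠ v1 := by rintro rfl; rcases hx1 with h | h; exacts [hxt1 h, hxt2 h]
    obtain ⟨k11, k12⟩ := key t u htu
    obtain ⟨k21, k22⟩ := key t w htw
    obtain ⟨k31, k32⟩ := key t v1 htv1
    have hfgt := hfg t
    have hdt : d = f t ∨ d = g t := by
      rcases stmt_11_mem_pair_cases hfgu hu hx2 hdx k11 with h | h
      · rcases k12 with h' | h'
        · exact Or.inl (h.symm.trans h')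
        · exact Or.inr (h.symm.trans h')
      · rcases k12 with h' | h'
        · exact absurd (h.symm.trans h') hxt1
        · exact absurd (h.symm.trans h') hxt2
    have het : e = f t ∨ e = g t := by
      rcases stmt_11_mem_pair_cases hfgw hw hy2 hey k21 with h | h
      · rcases k22 with h' | h'
        · exact Or.inl (h.symm.trans h')
        · exact Or.inr (h.symm.trans h')
      · rcases k22 with h' | h'
        · exact absurd ((hxy.trans h.symm).trans h') hxt1
        · exact absurd ((hxy.trans h.symm).trans h') hxt2
    rcases stmt_11_mem_pair_cases hfgt hdt het hde k32 with h | h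
    · rcases k31 with h' | h'
      · exact hdnf (h.symm.trans h')
      · exact hdng (h.symm.trans h')
    · rcases k31 with h' | h'
      · exact henf (h.symm.trans h')
      · exact heng (h.symm.trans h')
  -- counting
  have hdu : 2 * ({z : Fin n | z ≠ u ∧ φ s(z, u) = d}).ncard = n - 1 := by
    rcases hu with h | h
    · rw [h]; exact h1 u
    · rw [h]; exact h2 u
  have hew : 2 * ({z : Fin n | z ≠ w ∧ φ s(z, w) = e}).ncard = n - 1 := by
    rcases hw with h | h
    · rw [h]; exact h1 w
    · rw [h]; exact h2 w
  set A : Set (Fin n) := insert u {z : Fin n | z ≠ u ∧ φ s(z, u) = d} with hA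
  set B : Set (Fin n) := insert w {z : Fin n | z ≠ w ∧ φ s(z, w) = e} with hB
  have hdA : ∀ z ∈ A, d = f z ∨ d = g z := by
    intro z hz
    rw [hA, Set.mem_insert_iff] at hz
    rcases hz with rfl | ⟨hzu, hzd⟩
    · exact hu
    · rcases (key z u hzu).2 with h | h
      · exact Or.inl (hzd.symm.trans h)
      · exact Or.inr (hzd.symm.trans h)
  have heB : ∀ z ∈ B, e = f z ∨ e = g z := by
    intro z hz
    rw [hB, Set.mem_insert_iff] at hz
    rcases hz with rfl | ⟨hzw, hze⟩
    · exact hw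
    · rcases (key z w hzw).2 with h | h
      · exact Or.inl (hze.symm.trans h)
      · exact Or.inr (hze.symm.trans h)
  have hdisj : Disjoint A B := by
    rw [Set.disjoint_left]
    intro z hzA hzB
    exact stmt_11_not_three (hfg z) (hdA z hzA) (heB z hzB) (hcom z) hde hdx hex
  have hAcard : A.ncard = ({z : Fin n | z ≠ u ∧ φ s(z, u) = d}).ncard + 1 := by
    rw [hA, Set.ncard_insert_of_notMem (by simp) (Set.toFinite _)]
  have hBcard : B.ncard = ({z : Fin n | z ≠ w ∧ φ s(z, w) = e}).ncard + 1 := by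
    rw [hB, Set.ncard_insert_of_notMem (by simp) (Set.toFinite _)]
  have hABcard : (A ∪ B).ncard = A.ncard + B.ncard :=
    Set.ncard_union_eq hdisj (Set.toFinite _) (Set.toFinite _)
  have hle : (A ∪ B).ncard ≤ n := by
    have h' := Set.ncard_le_ncard (Set.subset_univ (A ∪ B)) Set.finite_univ
    simpa [Set.ncard_univ] using h'
  clear hu hw hx1 hx2 hy1 hy2 hz1 hz2 hzu hzw hcom hdA heB hdisj key hfg h1 h2
  omega
end

section
/- For q ≥ 2 and n satisfying (2^k − 1)q + 2^{k−1} < n, the simply-ordered edge k-coloring of K_n with consecutive color class sizes |M_1| = q+1, |M_i| = 2^{i−1}q + 2^{i−2} for 2 ≤ i ≤ k−1, and |M_k| = n − 2^{k−1}q − 2^{k−2} has the property that every cycle of length exactly n − q contains an edge of each of the k colors. -/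
open SimpleGraph

lemma walk_support_getElem {V : Type*} {G : SimpleGraph V} :
    ∀ {u v : V} (p : G.Walk u v) (i : ℕ) (hi : i < p.support.length),
      p.support[i] = p.getVert i := by
  intro u v p
  induction p with
  | nil =>
    intro i hi
    simp [Walk.support_nil] at hi
    subst hi
    simp [Walk.support_nil]
  | cons h q ih =>
    intro i hi
    cases i with
    | zero => simp [Walk.support_cons]
    | succ i =>
      simp only [Walk.support_cons, List.getElem_cons_succ, Walk.getVert_cons_succ]
      exact ih i (by simpa [Walk.support_cons] using hi)

lemma walk_edge_getVert_mem {V : Type*} {G : SimpleGraph V} :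
    ∀ {u v : V} (p : G.Walk u v) (i : ℕ), i < p.length →
      s(p.getVert i, p.getVert (i + 1)) ∈ p.edges := by
  intro u v p
  induction p with
  | nil => intro i hi; simp at hi
  | cons h q ih =>
    intro i hi
    cases i with
    | zero =>
      simp [Walk.edges_cons, Walk.getVert_zero, Walk.getVert_cons_succ]
    | succ i =>
      simp only [Walk.edges_cons, Walk.getVert_cons_succ, List.mem_cons]
      right
      exact ih i (by simpa [Walk.length_cons] using hi)


/-- Cumulative size of the first `i` color classes of the simply-ordered `C_q`-coloring:
`|M_1| = q+1`, `|M_i| = 2^{i-1} q + 2^{i-2}` for `2 ≤ i ≤ k-1`, last class to `n`.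
For `1 ≤ i ≤ k-1` the cumulative sum is `2^i q + 2^{i-1} - q`. -/
def cqCumul (q k n : ℕ) (i : ℕ) : ℕ :=
  if i < k then 2 ^ i * q + 2 ^ (i - 1) - q else n

/-- Color (in `1, …, k`) of the vertex with index `p` in the simply-ordered coloring. -/
noncomputable def cqVertexColor (q k n : ℕ) (p : ℕ) : ℕ :=
  sInf {i : ℕ | 1 ≤ i ∧ p < cqCumul q k n i}

/-- The simply-ordered edge coloring: edge `{i, j}` receives the class of `min i j`. -/
noncomputable def cqEdgeColor (q k n : ℕ) : Sym2 (Fin n) → ℕ :=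
  Sym2.lift ⟨fun a b => cqVertexColor q k n (min a.val b.val), by
    intro a b; simp [min_comm]⟩

/-- For `q ≥ 2` and `(2^k - 1) q + 2^{k-1} < n`, the simply-ordered `k`-coloring with
class sizes `q+1`, `2^{i-1} q + 2^{i-2}` (`2 ≤ i ≤ k-1`), `n - 2^{k-1} q - 2^{k-2}` is
`C_q`-polychromatic: every cycle of length exactly `n - q` gets all `k` colors. -/
theorem stmt_17 (q n k : ℕ) (hq : 2 ≤ q) (hk : 1 ≤ k) (hn : q + 3 ≤ n)
    (hbound : (2 ^ k - 1) * q + 2 ^ (k - 1) < n) :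
    ∀ (v : Fin n) (c : (⊤ : SimpleGraph (Fin n)).Walk v v),
      c.IsCycle → c.length = n - q →
      ∀ col : ℕ, 1 ≤ col → col ≤ k →
        ∃ e ∈ c.edges, cqEdgeColor q k n e = col := by
  intro v c hcyc hlen col hcol1 hcolk
  by_contra hno
  push_neg at hno
  set m := c.length with hmdef
  have hm3 : 3 ≤ m := hcyc.three_le_length
  have hmn : m = n - q := hlen
  have hmpos : 0 < m := by omega
  have hmlen : m ≤ n := by omega
  -- basic power facts for k
  have hek1 : 1 ≤ 2 ^ (k - 1) := Nat.one_le_two_pow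
  have hek2 : 2 ^ (k - 1) ≤ 2 ^ k := Nat.pow_le_pow_right (by norm_num) (by omega)
  have hekeq : 2 ^ k = 2 * 2 ^ (k - 1) := by
    conv_lhs => rw [show k = (k - 1) + 1 by omega]
    ring
  -- cumul facts
  have hcumk : cqCumul q k n k = n := by simp [cqCumul]
  have hcum_mono : ∀ i j, i ≤ j → cqCumul q k n i ≤ cqCumul q k n j := by
    intro i j hij
    have hf : ∀ a b : ℕ, a ≤ b → 2 ^ a * q + 2 ^ (a - 1) ≤ 2 ^ b * q + 2 ^ (b - 1) := by
      intro a b hab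
      exact Nat.add_le_add
        (Nat.mul_le_mul_right _ (Nat.pow_le_pow_right (by norm_num) hab))
        (Nat.pow_le_pow_right (by norm_num) (by omega))
    have hfk : ∀ a, a < k → 2 ^ a * q + 2 ^ (a - 1) ≤ n + q := by
      intro a ha
      have h1 := hf a (k - 1) (by omega)
      have h2 : 2 ^ (k - 1) * q + 2 ^ (k - 1 - 1) ≤ n + q := by
        have h3 : 2 ^ (k - 1 - 1) ≤ 2 ^ (k - 1) := Nat.pow_le_pow_right (by norm_num) (by omega)
        have h4 : 2 ^ (k - 1) * q ≤ (2 ^ k - 1) * q :=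
          Nat.mul_le_mul_right q (by omega)
        omega
      omega
    unfold cqCumul
    by_cases hjk : j < k
    · rw [if_pos (lt_of_le_of_lt hij hjk), if_pos hjk]
      exact Nat.sub_le_sub_right (hf i j hij) q
    · rw [if_neg hjk]
      by_cases hik : i < k
      · rw [if_pos hik]
        have := hfk i hik
        omega
      · rw [if_neg hik]
  -- vertex color facts
  have hcmem : ∀ p : ℕ, p < n →
      1 ≤ cqVertexColor q k n p ∧ p < cqCumul q k n (cqVertexColor q k n p) := by
    intro p hp
    exact Nat.sInf_mem (⟨k, hk, by rw [hcumk]; exact hp⟩ :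
      {i : ℕ | 1 ≤ i ∧ p < cqCumul q k n i}.Nonempty)
  have hcle : ∀ p : ℕ, p < n → ∀ j, 1 ≤ j →
      (cqVertexColor q k n p ≤ j ↔ p < cqCumul q k n j) := by
    intro p hp j hj
    constructor
    · intro h
      exact lt_of_lt_of_le (hcmem p hp).2 (hcum_mono _ _ h)
    · intro h
      exact Nat.sInf_le ⟨hj, h⟩
  -- positions
  have hP0 : c.getVert 0 = v := c.getVert_zero
  have hPm : c.getVert m = v := c.getVert_length
  -- injectivity on [1, m]
  have hsuplen : c.support.length = m + 1 := by rw [Walk.length_support]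
  have htlen : c.support.tail.length = m := by
    rw [List.length_tail, hsuplen]
    omega
  have hinj1 : ∀ i, 1 ≤ i → i ≤ m → ∀ j, 1 ≤ j → j ≤ m →
      c.getVert i = c.getVert j → i = j := by
    intro i h1i him j h1j hjm heq
    have hgt : ∀ a, ∀ ha : a - 1 < c.support.tail.length, 1 ≤ a → a ≤ m →
        c.support.tail[a-1]'ha = c.getVert a := by
      intro a ha h1a ham
      rw [List.getElem_tail, walk_support_getElem]
      congr 1
      omega
    have hbi : i - 1 < c.support.tail.length := by omega
    have hbj : j - 1 < c.support.tail.length := by omega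
    have key : i - 1 = j - 1 := by
      refine (hcyc.support_nodup.getElem_inj_iff (hi := hbi) (hj := hbj)).mp ?_
      rw [hgt i hbi h1i him, hgt j hbj h1j hjm]
      exact heq
    omega
  have hPinj : ∀ i, i < m → ∀ j, j < m → c.getVert i = c.getVert j → i = j := by
    intro i hi j hj heq
    rcases Nat.eq_zero_or_pos i with hi0 | hi0
    · rcases Nat.eq_zero_or_pos j with hj0 | hj0
      · omega
      · exfalso
        subst hi0
        have : m = j := hinj1 m (by omega) le_rfl j hj0 (by omega)
          (hPm.trans (hP0.symm.trans heq))
        omega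
    · rcases Nat.eq_zero_or_pos j with hj0 | hj0
      · exfalso
        subst hj0
        have : i = m := hinj1 i hi0 (by omega) m (by omega) le_rfl
          (heq.trans (hP0.trans hPm.symm))
        omega
      · exact hinj1 i hi0 (by omega) j hj0 (by omega) heq
  have hPsucc : ∀ i, i < m → c.getVert ((i + 1) % m) = c.getVert (i + 1) := by
    intro i hi
    rcases Nat.lt_or_ge (i + 1) m with h | h
    · rw [Nat.mod_eq_of_lt h]
    · have : i + 1 = m := by omega
      rw [this, Nat.mod_self, hP0, hPm]
  have hmod : ∀ i, i < m → (i + 1) % m = if i + 1 = m then 0 else i + 1 := by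
    intro i hi
    split
    · rename_i h; rw [h, Nat.mod_self]
    · exact Nat.mod_eq_of_lt (by omega)
  -- neighbor color lemma
  have hAB : ∀ i, i < m →
      (cqVertexColor q k n (c.getVert i).val = col →
        cqVertexColor q k n (c.getVert (i+1)).val < col) ∧
      (cqVertexColor q k n (c.getVert (i+1)).val = col →
        cqVertexColor q k n (c.getVert i).val < col) := by
    intro i hi
    have hadj := c.adj_getVert_succ hi
    have hne : (c.getVert i) ≠ (c.getVert (i+1)) := by
      simpa using hadj.ne
    have hmem := walk_edge_getVert_mem c i hi
    have hnc := hno _ hmem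
    have heval : cqEdgeColor q k n s(c.getVert i, c.getVert (i+1)) =
        cqVertexColor q k n (min (c.getVert i).val (c.getVert (i+1)).val) := by
      simp [cqEdgeColor]
    rw [heval] at hnc
    have hnev : (c.getVert i).val ≠ (c.getVert (i+1)).val := by
      simpa [Fin.val_inj] using hne
    constructor
    · intro hB
      rcases Nat.lt_or_ge (c.getVert (i+1)).val (c.getVert i).val with hlt | hge
      · rw [min_eq_right (le_of_lt hlt)] at hnc
        have hmono : cqVertexColor q k n (c.getVert (i+1)).val ≤ col := by
          rw [hcle _ (c.getVert (i+1)).isLt col hcol1]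
          have h2 := (hcmem (c.getVert i).val (c.getVert i).isLt).2
          rw [hB] at h2
          omega
        have h1 := (hcmem (c.getVert (i+1)).val (c.getVert (i+1)).isLt).1
        omega
      · exfalso
        rw [min_eq_left hge] at hnc
        exact hnc hB
    · intro hB
      rcases Nat.lt_or_ge (c.getVert i).val (c.getVert (i+1)).val with hlt | hge
      · rw [min_eq_left (le_of_lt hlt)] at hnc
        have hmono : cqVertexColor q k n (c.getVert i).val ≤ col := by
          rw [hcle _ (c.getVert i).isLt col hcol1]
          have h2 := (hcmem (c.getVert (i+1)).val (c.getVert (i+1)).isLt).2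
          rw [hB] at h2
          omega
        have h1 := (hcmem (c.getVert i).val (c.getVert i).isLt).1
        omega
      · exfalso
        rw [min_eq_right hge] at hnc
        exact hnc hB
  -- boundaries
  set L := if col = 1 then 0 else cqCumul q k n (col - 1) with hLdef
  set R := cqCumul q k n col with hRdef
  have hRn : R ≤ n := by
    rw [hRdef]
    have h := hcum_mono col k hcolk
    rwa [hcumk] at h
  have hLR : L ≤ R := by
    rw [hLdef, hRdef]
    split
    · exact Nat.zero_le _
    · exact hcum_mono _ _ (by omega)
  have hcolA : ∀ u : Fin n, (cqVertexColor q k n u.val < col ↔ u.val < L) := by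
    intro u
    by_cases h1 : col = 1
    · subst h1
      have := (hcmem u.val u.isLt).1
      simp [hLdef]
      omega
    · have h2 : cqVertexColor q k n u.val < col ↔ cqVertexColor q k n u.val ≤ col - 1 := by
        omega
      rw [h2, hcle _ u.isLt _ (by omega), hLdef, if_neg h1]
  have hcolB : ∀ u : Fin n, (cqVertexColor q k n u.val = col ↔ L ≤ u.val ∧ u.val < R) := by
    intro u
    have h1 := hcle u.val u.isLt col hcol1
    have h2 := hcolA u
    rw [← hRdef] at h1
    omega
  -- index sets
  set SA := (Finset.range m).filter (fun i => cqVertexColor q k n (c.getVert i).val < col)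
    with hSAdef
  set SB := (Finset.range m).filter (fun i => cqVertexColor q k n (c.getVert i).val = col)
    with hSBdef
  -- |SA| ≤ L
  have hSAcard : SA.card ≤ L := by
    have hinjval : Set.InjOn (fun i => (c.getVert i).val) (SA : Set ℕ) := by
      intro i hi j hj h
      rw [Finset.mem_coe, hSAdef, Finset.mem_filter, Finset.mem_range] at hi hj
      exact hPinj i hi.1 j hj.1 (Fin.val_injective h)
    calc SA.card = (SA.image (fun i => (c.getVert i).val)).card :=
          (Finset.card_image_of_injOn hinjval).symm
      _ ≤ (Finset.range L).card := by
          apply Finset.card_le_card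
          intro x hx
          obtain ⟨i, hi, rfl⟩ := Finset.mem_image.mp hx
          have hi' := Finset.mem_filter.mp (by rwa [hSAdef] at hi)
          exact Finset.mem_range.mpr ((hcolA _).mp hi'.2)
      _ = L := Finset.card_range L
  -- R ≤ |SB| + q + L
  have hSBcard : R ≤ SB.card + q + L := by
    have hinjrange : Set.InjOn c.getVert ((Finset.range m : Finset ℕ) : Set ℕ) := by
      intro i hi j hj h
      rw [Finset.mem_coe, Finset.mem_range] at hi hj
      exact hPinj i hi j hj h
    have himg : ((Finset.range m).image c.getVert).card = m := by
      rw [Finset.card_image_of_injOn hinjrange, Finset.card_range]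
    set Vc := Finset.univ.filter (fun u : Fin n => cqVertexColor q k n u.val = col)
      with hVcdef
    have hVc : Vc.card = R - L := by
      have himg2 : Vc.image Fin.val = Finset.Ico L R := by
        ext x
        simp only [hVcdef, Finset.mem_image, Finset.mem_filter, Finset.mem_univ, true_and,
          Finset.mem_Ico]
        constructor
        · rintro ⟨u, hu, rfl⟩
          exact (hcolB u).mp hu
        · rintro ⟨h1, h2⟩
          exact ⟨⟨x, lt_of_lt_of_le h2 hRn⟩, (hcolB _).mpr ⟨h1, h2⟩, rfl⟩
      have h2 := Finset.card_image_of_injective Vc Fin.val_injective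
      rw [himg2, Nat.card_Ico] at h2
      omega
    have hsub : Vc ⊆ (SB.image c.getVert) ∪
        (Finset.univ \ ((Finset.range m).image c.getVert)) := by
      intro u hu
      by_cases h : u ∈ (Finset.range m).image c.getVert
      · obtain ⟨i, hi, rfl⟩ := Finset.mem_image.mp h
        refine Finset.mem_union_left _ (Finset.mem_image.mpr ⟨i, ?_, rfl⟩)
        rw [hSBdef, Finset.mem_filter]
        refine ⟨hi, ?_⟩
        have hu' := Finset.mem_filter.mp (by rwa [hVcdef] at hu)
        exact hu'.2
      · exact Finset.mem_union_right _ (Finset.mem_sdiff.mpr ⟨Finset.mem_univ u, h⟩)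
    have hcard := Finset.card_le_card hsub
    have h3 := Finset.card_union_le (SB.image c.getVert)
      (Finset.univ \ ((Finset.range m).image c.getVert))
    have h4 : (SB.image c.getVert).card ≤ SB.card := Finset.card_image_le
    have h5 : (Finset.univ \ ((Finset.range m).image c.getVert)).card = n - m := by
      rw [Finset.card_sdiff_of_subset (Finset.subset_univ _), himg]
      simp
    omega
  -- injection SB → SA
  have hinj' : ∀ i, i < m → ∀ j, j < m → (i+1) % m = (j+1) % m → i = j := by
    intro i hi j hj h
    rw [hmod i hi, hmod j hj] at h
    split at h <;> split at h <;> omega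
  have hmapsto : ∀ i ∈ SB, (i+1) % m ∈ SA := by
    intro i hi
    rw [hSBdef, Finset.mem_filter, Finset.mem_range] at hi
    have him : (i+1) % m < m := Nat.mod_lt _ hmpos
    rw [hSAdef, Finset.mem_filter, Finset.mem_range]
    refine ⟨him, ?_⟩
    rw [hPsucc i hi.1]
    exact (hAB i hi.1).1 hi.2
  have hBA : SB.card ≤ SA.card := by
    apply Finset.card_le_card_of_injOn _ hmapsto
    intro i hi j hj h
    rw [hSBdef, Finset.coe_filter] at hi hj
    simp only [Set.mem_setOf_eq, Finset.mem_range] at hi hj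
    exact hinj' i hi.1 j hj.1 h
  -- case split
  by_cases hck : col = k
  · -- col = k
    by_cases hk1 : k = 1
    · have hL0 : L = 0 := by rw [hLdef, if_pos (by omega)]
      have hR0 : R = n := by rw [hRdef, hck, hcumk]
      omega
    · have hL' : L = 2 ^ (k-1) * q + 2 ^ (k-2) - q := by
        rw [hLdef, if_neg (by omega), hck]
        unfold cqCumul
        rw [if_pos (by omega), show k - 1 - 1 = k - 2 by omega]
      have hR0 : R = n := by rw [hRdef, hck, hcumk]
      have e1 : 1 ≤ 2 ^ (k-2) := Nat.one_le_two_pow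
      have e2 : 2 ^ (k-1) = 2 * 2 ^ (k-2) := by
        conv_lhs => rw [show k - 1 = (k - 2) + 1 by omega]
        ring
      have hql : q ≤ 2 ^ (k-1) * q := Nat.le_mul_of_pos_left q (by positivity)
      have hprod : (2 ^ k - 1) * q = 2 * (2 ^ (k-1) * q) - q := by
        rw [Nat.sub_one_mul, hekeq, mul_assoc]
      omega
  · -- col < k
    have hclt : col < k := lt_of_le_of_ne hcolk hck
    have hR' : R = 2 ^ col * q + 2 ^ (col - 1) - q := by
      rw [hRdef]; unfold cqCumul; rw [if_pos hclt]
    by_cases hc1 : col = 1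
    · have hL0 : L = 0 := by rw [hLdef, if_pos hc1]
      have : R = q + 1 := by
        rw [hR', hc1]
        have h1 : (2:ℕ) ^ 1 = 2 := by norm_num
        have h2 : (2:ℕ) ^ (1-1) = 1 := by norm_num
        omega
      omega
    · have hc2 : 2 ≤ col := by omega
      have hL' : L = 2 ^ (col-1) * q + 2 ^ (col-2) - q := by
        rw [hLdef, if_neg hc1]
        unfold cqCumul
        rw [if_pos (by omega), show col - 1 - 1 = col - 2 by omega]
      have p1 : 1 ≤ 2 ^ (col-2) := Nat.one_le_two_pow
      have p2 : 2 ^ (col-1) = 2 * 2 ^ (col-2) := by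
        conv_lhs => rw [show col - 1 = (col - 2) + 1 by omega]
        ring
      have p3 : 2 ^ col = 4 * 2 ^ (col-2) := by
        conv_lhs => rw [show col = (col - 2) + 2 by omega]
        ring
      have p4 : 2 ^ col ≤ 2 ^ (k-1) := Nat.pow_le_pow_right (by norm_num) (by omega)
      have p2q : 2 ^ (col-1) * q = 2 * (2 ^ (col-2) * q) := by rw [p2, mul_assoc]
      have p3q : 2 ^ col * q = 4 * (2 ^ (col-2) * q) := by rw [p3, mul_assoc]
      have p4q : 2 ^ col * q ≤ 2 ^ (k-1) * q := Nat.mul_le_mul_right q p4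
      have hqc : q ≤ 2 ^ (col-2) * q := Nat.le_mul_of_pos_left q (by positivity)
      have hql : q ≤ 2 ^ (k-1) * q := Nat.le_mul_of_pos_left q (by positivity)
      have hprod : (2 ^ k - 1) * q = 2 * (2 ^ (k-1) * q) - q := by
        rw [Nat.sub_one_mul, hekeq, mul_assoc]
      -- R = 2L + q, equality throughout
      have hReq : R = 2 * L + q := by omega
      have hcards : SB.card = L ∧ SA.card = L := by omega
      -- surjectivity
      have himgeq : SB.image (fun i => (i+1) % m) = SA := by
        apply Finset.eq_of_subset_of_card_le
        · intro x hx
          obtain ⟨i, hi, hix⟩ := Finset.mem_image.mp hx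
          rw [← hix]
          exact hmapsto i hi
        · rw [Finset.card_image_of_injOn]
          · omega
          · intro i hi j hj h
            rw [hSBdef, Finset.coe_filter] at hi hj
            simp only [Set.mem_setOf_eq, Finset.mem_range] at hi hj
            exact hinj' i hi.1 j hj.1 h
      -- the C-step
      have hCstep : ∀ j, j < m →
          ¬ (cqVertexColor q k n (c.getVert j).val < col) →
          ¬ (cqVertexColor q k n (c.getVert j).val = col) →
          ¬ (cqVertexColor q k n (c.getVert ((j+1) % m)).val < col) ∧
          ¬ (cqVertexColor q k n (c.getVert ((j+1) % m)).val = col) := by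
        intro j hj hjA hjB
        have hj1 : (j+1) % m < m := Nat.mod_lt _ hmpos
        constructor
        · intro hA'
          have hmem : (j+1) % m ∈ SA := by
            rw [hSAdef, Finset.mem_filter, Finset.mem_range]; exact ⟨hj1, hA'⟩
          rw [← himgeq] at hmem
          obtain ⟨i, hiSB, hieq⟩ := Finset.mem_image.mp hmem
          have hiSB' := Finset.mem_filter.mp (by rwa [hSBdef] at hiSB)
          have him : i < m := Finset.mem_range.mp hiSB'.1
          have : i = j := hinj' i him j hj hieq
          exact hjB (this ▸ hiSB'.2)
        · intro hB'
          rw [hPsucc j hj] at hB'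
          exact hjA ((hAB j hj).2 hB')
      -- existence of a C position
      have h2Lm : 2 * L < m := by omega
      have hCex : ∃ i0, i0 < m ∧ ¬ (cqVertexColor q k n (c.getVert i0).val < col) ∧
          ¬ (cqVertexColor q k n (c.getVert i0).val = col) := by
        by_contra h
        push_neg at h
        have hsub : Finset.range m ⊆ SA ∪ SB := by
          intro i hi
          have hi' := Finset.mem_range.mp hi
          rw [Finset.mem_union, hSAdef, hSBdef, Finset.mem_filter, Finset.mem_filter]
          by_cases hA : cqVertexColor q k n (c.getVert i).val < col
          · exact Or.inl ⟨hi, hA⟩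
          · exact Or.inr ⟨hi, h i hi' (by omega)⟩
        have := Finset.card_le_card hsub
        have := Finset.card_union_le SA SB
        rw [Finset.card_range] at *
        omega
      obtain ⟨i0, hi0m, hi0A, hi0B⟩ := hCex
      -- iterate around the cycle
      have hiter : ∀ t, ¬ (cqVertexColor q k n (c.getVert ((i0 + t) % m)).val < col) ∧
          ¬ (cqVertexColor q k n (c.getVert ((i0 + t) % m)).val = col) := by
        intro t
        induction t with
        | zero =>
          rw [Nat.add_zero, Nat.mod_eq_of_lt hi0m]
          exact ⟨hi0A, hi0B⟩
        | succ t ih =>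
          have hlt : (i0 + t) % m < m := Nat.mod_lt _ hmpos
          have hs := hCstep _ hlt ih.1 ih.2
          have heq : ((i0 + t) % m + 1) % m = (i0 + (t+1)) % m := by
            rw [Nat.mod_add_mod, ← Nat.add_assoc]
          rw [heq] at hs
          exact hs
      -- contradiction with SA nonempty
      have hLpos : 1 ≤ L := by omega
      have hSAne : SA.Nonempty := Finset.card_pos.mp (by omega)
      obtain ⟨j, hjSA⟩ := hSAne
      have hj := Finset.mem_filter.mp (by rwa [hSAdef] at hjSA)
      have hjm := Finset.mem_range.mp hj.1
      have hreach : (i0 + (m - i0 + j)) % m = j := by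
        rw [show i0 + (m - i0 + j) = m + j by omega, Nat.add_mod_left,
          Nat.mod_eq_of_lt hjm]
      have := (hiter (m - i0 + j)).1
      rw [hreach] at this
      exact this hj.2
end

section
/- Let m + 1 be even, and suppose K_n (n ≥ m + 1 ≥ 6) has an edge coloring with at least 3 colors in which the vertices of an (m+1)-cycle v_1 … v_{m+1} split into two cliques on the odd-indexed and even-indexed vertices, each of size (m+1)/2, with all edges within each clique colored t and all edges between the cliques colored with colors different from t, and these are the only color-t edges of K_n. Then K_n contains an m-cycle that misses some color: either a color w ≠ t has two disjoint edges, giving an m-cycle with colors only in {t, w}, contradicting 3-color coverage, or all color-w edges share a vertex x, and some m-cycle through x avoids color w. -/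
/-!
Choose distinct `p₁, p₂, p₃ ∈ P` and `q₁, q₂, q₃ ∈ Q`, and write `r = (m + 1) / 2`. For `i ≠ j`,
the cycle that runs through all of `P` from `pᵢ` to `pⱼ`, crosses to `qⱼ`, runs through `r - 3`
further vertices of `Q` to `qᵢ` and returns to `pᵢ` has length `2r - 1 = m`, and its only edges
not of color `t` are `pᵢqᵢ` and `pⱼqⱼ`. If two of the crossing colors `φ(pᵢqᵢ)` coincide, such a
cycle uses two colors only and misses a third; otherwise the cycle for `{2, 3}` misses the color
of `p₁q₁`, which is not `t`.
-/

open Finset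

theorem Finset.exists_nodup_cons_append_singleton {V : Type*} [DecidableEq V] {s : Finset V}
    {a b : V} (ha : a ∈ s) (hb : b ∈ s) (hab : a ≠ b) {k : ℕ} (hk : 2 ≤ k) (hks : k ≤ #s) :
    ∃ l : List V, (a :: l ++ [b]).Nodup ∧ l.length + 2 = k ∧ ∀ x ∈ l, x ∈ s := by
  obtain ⟨B, hBs, hB⟩ := exists_subset_card_eq (s := (s.erase a).erase b) (n := k - 2)
    (by rw [card_erase_of_mem (mem_erase.2 ⟨hab.symm, hb⟩), card_erase_of_mem ha]; omega)
  refine ⟨B.toList, ?_, by rw [length_toList, hB]; omega, fun x hx => ?_⟩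
  · have haB : a ∉ B := fun h => by simpa using hBs h
    have hbB : b ∉ B := fun h => by simpa using hBs h
    simp [List.nodup_append, B.nodup_toList, haB, hbB, hab]
  · exact mem_of_mem_erase (mem_of_mem_erase (hBs (mem_toList.1 hx)))

namespace SimpleGraph

variable {V : Type*} {G : SimpleGraph V}

theorem exists_isCycle_length_eq_of_isChain {L : List V} (hne : L ≠ []) (hnd : L.Nodup)
    (hL : 3 ≤ L.length) (hchain : L.IsChain G.Adj)
    (hclose : G.Adj (L.getLast hne) (L.head hne)) :
    ∃ c : G.Walk (L.getLast hne) (L.getLast hne), c.IsCycle ∧ c.length = L.length := by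
  set c := Walk.cons hclose (.ofSupport L hne hchain)
  have hlen : c.length = L.length := by
    simp only [c, Walk.length_cons, Walk.length_ofSupport]; omega
  refine ⟨c, Walk.isCycle_iff_isPath_tail_and_le_length.2 ⟨?_, hlen ▸ hL⟩, hlen⟩
  simpa [c, Walk.isPath_def] using hnd

theorem IsClique.isChain_adj {s : Set V} (hs : G.IsClique s) {l : List V} (hl : l.Nodup)
    (hls : ∀ x ∈ l, x ∈ s) : l.IsChain G.Adj :=
  (hl.imp_of_mem fun hx hy hxy => hs (hls _ hx) (hls _ hy) hxy).isChain

theorem exists_isCycle_of_isClique_of_isClique [DecidableEq V] {P Q : Finset V}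
    (hPQ : Disjoint P Q) (hP : G.IsClique (P : Set V)) (hQ : G.IsClique (Q : Set V))
    {p p' q q' : V} (hp : p ∈ P) (hp' : p' ∈ P) (hpp' : p ≠ p')
    (hq : q ∈ Q) (hq' : q' ∈ Q) (hqq' : q ≠ q') (hpq : G.Adj p q) (hpq' : G.Adj p' q')
    {k : ℕ} (hk : 2 ≤ k) (hkQ : k ≤ #Q) :
    ∃ (v : V) (c : G.Walk v v), c.IsCycle ∧ c.length = #P + k := by
  obtain ⟨A, hA, hAlen, hAP⟩ := exists_nodup_cons_append_singleton hp hp' hpp'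
    (one_lt_card.2 ⟨p, hp, p', hp', hpp'⟩) le_rfl
  obtain ⟨B, hB, hBlen, hBQ⟩ := exists_nodup_cons_append_singleton hq' hq hqq'.symm hk hkQ
  have hAP' : ∀ x ∈ p :: A ++ [p'], x ∈ P := by simpa [or_imp, forall_and, hp, hp'] using hAP
  have hBQ' : ∀ x ∈ q' :: B ++ [q], x ∈ Q := by simpa [or_imp, forall_and, hq, hq'] using hBQ
  set L := p :: A ++ [p'] ++ (q' :: B ++ [q])
  have hlen : L.length = #P + k := by
    simp only [L, List.length_append, List.length_cons, List.length_nil]; omega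
  have hnd : L.Nodup :=
    List.nodup_append.2 ⟨hA, hB, fun x hx y hy hxy =>
      Finset.disjoint_left.1 hPQ (hAP' x hx) (hxy ▸ hBQ' y hy)⟩
  have hchain : L.IsChain G.Adj :=
    List.isChain_append.2 ⟨hP.isChain_adj hA hAP', hQ.isChain_adj hB hBQ',
      by simp [List.getLast?_cons, hpq']⟩
  obtain ⟨c, hc, hclen⟩ := exists_isCycle_length_eq_of_isChain (by simp [L]) hnd (by omega)
    hchain (by simpa [L] using hpq.symm)
  exact ⟨_, c, hc, hclen.trans hlen⟩

end SimpleGraph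

theorem exists_isCycle_avoiding_color_of_cliques {V α : Type*} [DecidableEq V] {φ : Sym2 V → α}
    {t w : α} (hwt : w ≠ t) {P Q : Finset V} (hPQ : Disjoint P Q)
    (hP : ∀ x ∈ P, ∀ y ∈ P, x ≠ y → φ s(x, y) = t) (hQ : ∀ x ∈ Q, ∀ y ∈ Q, x ≠ y → φ s(x, y) = t)
    {p p' q q' : V} (hp : p ∈ P) (hp' : p' ∈ P) (hpp' : p ≠ p')
    (hq : q ∈ Q) (hq' : q' ∈ Q) (hqq' : q ≠ q') (hpq : φ s(p, q) ≠ w) (hpq' : φ s(p', q') ≠ w)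
    {k : ℕ} (hk : 2 ≤ k) (hkQ : k ≤ #Q) :
    ∃ (v : V) (c : (⊤ : SimpleGraph V).Walk v v),
      c.IsCycle ∧ c.length = #P + k ∧ ∀ e ∈ c.edges, φ e ≠ w := by
  set G := SimpleGraph.fromEdgeSet {e | φ e ≠ w}
  have hclique {S : Finset V} (hS : ∀ x ∈ S, ∀ y ∈ S, x ≠ y → φ s(x, y) = t) :
      G.IsClique (S : Set V) := fun x hx y hy hxy => by
    simp [G, hS x hx y hy hxy, hwt.symm, hxy]
  have hne {x y : V} (hx : x ∈ P) (hy : y ∈ Q) : x ≠ y := fun h =>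
    Finset.disjoint_left.1 hPQ hx (h ▸ hy)
  obtain ⟨v, c, hc, hlen⟩ := G.exists_isCycle_of_isClique_of_isClique hPQ (hclique hP) (hclique hQ)
    hp hp' hpp' hq hq' hqq' (by simp [G, hpq, hne hp hq]) (by simp [G, hpq', hne hp' hq']) hk hkQ
  refine ⟨v, c.mapLe le_top, by simpa using hc, by simpa using hlen, fun e he => ?_⟩
  have := c.edges_subset_edgeSet (by simpa using he)
  simp only [G, SimpleGraph.edgeSet_fromEdgeSet] at this
  exact this.1

theorem exists_ne_two_of_three {α : Type*} {present : α → Prop} {t a₁ a₂ a₃ : α}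
    (ha₁ : present a₁) (ha₁t : a₁ ≠ t)
    (h : ∃ c₁ c₂ c₃ : α, c₁ ≠ c₂ ∧ c₁ ≠ c₃ ∧ c₂ ≠ c₃ ∧ present c₁ ∧ present c₂ ∧ present c₃) :
    ∃ w, present w ∧ w ≠ t ∧ (a₁ ≠ w ∧ a₂ ≠ w ∨ a₁ ≠ w ∧ a₃ ≠ w ∨ a₂ ≠ w ∧ a₃ ≠ w) := by
  obtain ⟨c₁, c₂, c₃, h₁₂, h₁₃, h₂₃, hc₁, hc₂, hc₃⟩ := h
  -- If two of the `aᵢ` coincide, one of the `cᵢ` avoids both `t` and them; otherwise take `a₁`.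
  have avoid (a : α) : ∃ w, present w ∧ w ≠ t ∧ w ≠ a := by grind
  grind

theorem stmt_19_general (n m : ℕ) (hm : 5 ≤ m) (heven : Even (m + 1))
    (φ : Sym2 (Fin n) → ℕ) (t : ℕ)
    (hcolors : ∃ c1 c2 c3 : ℕ, c1 ≠ c2 ∧ c1 ≠ c3 ∧ c2 ≠ c3 ∧
      (∃ e : Sym2 (Fin n), ¬ e.IsDiag ∧ φ e = c1) ∧
      (∃ e : Sym2 (Fin n), ¬ e.IsDiag ∧ φ e = c2) ∧
      (∃ e : Sym2 (Fin n), ¬ e.IsDiag ∧ φ e = c3))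
    (P Q : Finset (Fin n)) (hdisj : Disjoint P Q)
    (hPcard : P.card = (m + 1) / 2) (hQcard : Q.card = (m + 1) / 2)
    (hP : ∀ x ∈ P, ∀ y ∈ P, x ≠ y → φ s(x, y) = t)
    (hQ : ∀ x ∈ Q, ∀ y ∈ Q, x ≠ y → φ s(x, y) = t)
    (hPQ : ∀ x ∈ P, ∀ y ∈ Q, φ s(x, y) ≠ t) :
    ∃ (v : Fin n) (c : (⊤ : SimpleGraph (Fin n)).Walk v v),
      c.IsCycle ∧ c.length = m ∧
      ∃ w : ℕ, (∃ e : Sym2 (Fin n), ¬ e.IsDiag ∧ φ e = w) ∧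
        ∀ e ∈ c.edges, φ e ≠ w := by
  obtain ⟨r, hr⟩ := heven
  obtain ⟨_, hPsub, hP3⟩ := exists_subset_card_eq (show 3 ≤ #P by omega)
  obtain ⟨p₁, p₂, p₃, hp₁₂, hp₁₃, hp₂₃, rfl⟩ := card_eq_three.1 hP3
  obtain ⟨_, hQsub, hQ3⟩ := exists_subset_card_eq (show 3 ≤ #Q by omega)
  obtain ⟨q₁, q₂, q₃, hq₁₂, hq₁₃, hq₂₃, rfl⟩ := card_eq_three.1 hQ3
  simp only [insert_subset_iff, singleton_subset_iff] at hPsub hQsub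
  obtain ⟨hp₁, hp₂, hp₃⟩ := hPsub
  obtain ⟨hq₁, hq₂, hq₃⟩ := hQsub
  have hpresent : ∃ e : Sym2 (Fin n), ¬ e.IsDiag ∧ φ e = φ s(p₁, q₁) :=
    ⟨s(p₁, q₁), fun h => Finset.disjoint_left.1 hdisj hp₁ (Sym2.mk_isDiag_iff.1 h ▸ hq₁), rfl⟩
  obtain ⟨w, hw, hwt, hpair⟩ := exists_ne_two_of_three (a₂ := φ s(p₂, q₂)) (a₃ := φ s(p₃, q₃))
    (present := fun c => ∃ e : Sym2 (Fin n), ¬ e.IsDiag ∧ φ e = c) hpresent (hPQ p₁ hp₁ q₁ hq₁)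
    hcolors
  suffices ∃ p ∈ P, ∃ p' ∈ P, p ≠ p' ∧ ∃ q ∈ Q, ∃ q' ∈ Q, q ≠ q' ∧
      φ s(p, q) ≠ w ∧ φ s(p', q') ≠ w by
    obtain ⟨p, hp, p', hp', hpp', q, hq, q', hq', hqq', hpq, hpq'⟩ := this
    obtain ⟨v, c, hc, hlen, hcw⟩ := exists_isCycle_avoiding_color_of_cliques hwt hdisj hP hQ
      hp hp' hpp' hq hq' hqq' hpq hpq' (k := r - 1) (by omega) (by omega)
    exact ⟨v, c, hc, by omega, w, hw, hcw⟩
  rcases hpair with ⟨h₁, h₂⟩ | ⟨h₁, h₃⟩ | ⟨h₂, h₃⟩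
  · exact ⟨p₁, hp₁, p₂, hp₂, hp₁₂, q₁, hq₁, q₂, hq₂, hq₁₂, h₁, h₂⟩
  · exact ⟨p₁, hp₁, p₃, hp₃, hp₁₃, q₁, hq₁, q₃, hq₃, hq₁₃, h₁, h₃⟩
  · exact ⟨p₂, hp₂, p₃, hp₃, hp₂₃, q₂, hq₂, q₃, hq₃, hq₂₃, h₂, h₃⟩

/-- Key case analysis: suppose `K_n` (`n ≥ m + 1`, `m + 1 ≥ 6` even) is colored with at
least 3 colors so that the color-`t` edges are exactly the edges inside two disjoint
cliques `P`, `Q`, each of `(m+1)/2` vertices, and all `P`–`Q` edges avoid color `t`.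
Then some `m`-cycle misses one of the colors present in the coloring. -/
theorem stmt_19 (n m : ℕ) (hm : 5 ≤ m) (heven : Even (m + 1)) (hn : m + 1 ≤ n)
    (φ : Sym2 (Fin n) → ℕ) (t : ℕ)
    (hcolors : ∃ c1 c2 c3 : ℕ, c1 ≠ c2 ∧ c1 ≠ c3 ∧ c2 ≠ c3 ∧
      (∃ e : Sym2 (Fin n), ¬ e.IsDiag ∧ φ e = c1) ∧
      (∃ e : Sym2 (Fin n), ¬ e.IsDiag ∧ φ e = c2) ∧
      (∃ e : Sym2 (Fin n), ¬ e.IsDiag ∧ φ e = c3))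
    (P Q : Finset (Fin n)) (hdisj : Disjoint P Q)
    (hPcard : P.card = (m + 1) / 2) (hQcard : Q.card = (m + 1) / 2)
    (hP : ∀ x ∈ P, ∀ y ∈ P, x ≠ y → φ s(x, y) = t)
    (hQ : ∀ x ∈ Q, ∀ y ∈ Q, x ≠ y → φ s(x, y) = t)
    (hPQ : ∀ x ∈ P, ∀ y ∈ Q, φ s(x, y) ≠ t)
    (honly : ∀ x y : Fin n, x ≠ y → φ s(x, y) = t →
      (x ∈ P ∧ y ∈ P) ∨ (x ∈ Q ∧ y ∈ Q)) :
    ∃ (v : Fin n) (c : (⊤ : SimpleGraph (Fin n)).Walk v v),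
      c.IsCycle ∧ c.length = m ∧
      ∃ w : ℕ, (∃ e : Sym2 (Fin n), ¬ e.IsDiag ∧ φ e = w) ∧
        ∀ e ∈ c.edges, φ e ≠ w :=
  stmt_19_general n m hm heven φ t hcolors P Q hdisj hPcard hQcard hP hQ hPQ
end
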